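/- arXiv:2306.03884 — 6 statements merged into one kernel-verified Lean document; each statement's English description precedes it below -/
import Mathlib

section
/- For every n ≥ 3, the path on n vertices with terminals s and t taken as the two endpoints of the path is an optimal (n,n-1)-graph: for every tree T on n vertices, every pair of distinct vertices s',t' of T, and every p ∈ (0,1), sRel(P_n, s, t; p) ≥ sRel(T, s', t'; p). -/
/-- A finite loopless multigraph: a finite vertex type `V`, a finite edge type `E`,
and an endpoint map assigning to each edge an unordered pair of distinct vertices. -/
structure Multigraph where
  V : Type
  E : Type
  [fintV : Fintype V]
  [fintE : Fintype E]
  [decV : DecidableEq V]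
  [decE : DecidableEq E]
  ends : E → Sym2 V
  loopless : ∀ e, ¬ (ends e).IsDiag

attribute [instance] Multigraph.fintV Multigraph.fintE Multigraph.decV Multigraph.decE

namespace Multigraph

/-- The simple graph on `G.V` underlying the spanning subgraph of `G` with edge set `E'`. -/
def subgraph (G : Multigraph) (E' : Finset G.E) : SimpleGraph G.V where
  Adj u v := u ≠ v ∧ ∃ e ∈ E', G.ends e = s(u, v)
  symm := by
    constructor
    rintro u v ⟨huv, e, he, hends⟩
    exact ⟨huv.symm, e, he, hends.trans (Sym2.eq_swap)⟩
  loopless := by constructor; rintro u ⟨h, -⟩; exact h rfl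

/-- The spanning subgraph of `G` with edge set `E'` has exactly two connected components,
one containing `s` and the other containing `t`. -/
def SplitState (G : Multigraph) (s t : G.V) (E' : Finset G.E) : Prop :=
  ¬ (G.subgraph E').Reachable s t ∧
    ∀ v : G.V, (G.subgraph E').Reachable v s ∨ (G.subgraph E').Reachable v t

open scoped Classical in
/-- The split reliability of `G` with terminals `s` and `t`, at edge probability `p`. -/
noncomputable def sRel (G : Multigraph) (s t : G.V) (p : ℝ) : ℝ :=
  ∑ E' : Finset G.E, if G.SplitState s t E' then
    p ^ E'.card * (1 - p) ^ (Fintype.card G.E - E'.card) else 0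

open scoped Classical in
/-- `N_i(G,s,t)`: the number of edge subsets of cardinality `i` whose spanning subgraph has
exactly two connected components, one containing `s` and the other containing `t`. -/
noncomputable def Nst (G : Multigraph) (s t : G.V) (i : ℕ) : ℕ :=
  (Finset.univ.filter fun E' : Finset G.E => E'.card = i ∧ G.SplitState s t E').card

/-- A multigraph is connected when its underlying simple graph is. -/
def Connected (G : Multigraph) : Prop := (G.subgraph Finset.univ).Connected

open scoped Classical in
/-- The all-terminal reliability of `G` at edge probability `p`. -/
noncomputable def Rel (G : Multigraph) (p : ℝ) : ℝ :=
  ∑ E' : Finset G.E, if (G.subgraph E').Connected then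
    p ^ E'.card * (1 - p) ^ (Fintype.card G.E - E'.card) else 0

/-- `G` together with terminals `s ≠ t` is an optimal `(n,m)`-graph for split reliability. -/
def IsOptimal (n m : ℕ) (G : Multigraph) (s t : G.V) : Prop :=
  G.Connected ∧ Fintype.card G.V = n ∧ Fintype.card G.E = m ∧ s ≠ t ∧
    ∀ (H : Multigraph) (s' t' : H.V), H.Connected → Fintype.card H.V = n →
      Fintype.card H.E = m → s' ≠ t' → ∀ p : ℝ, 0 < p → p < 1 →
        H.sRel s' t' p ≤ G.sRel s t p

/-- An isomorphism of multigraphs taking terminals `s,t` of `G` to terminals `u,v` of `H`. -/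
def IsoTerm (G H : Multigraph) (s t : G.V) (u v : H.V) : Prop :=
  ∃ (φ : G.V ≃ H.V) (ψ : G.E ≃ H.E),
    (∀ e, H.ends (ψ e) = (G.ends e).map φ) ∧ φ s = u ∧ φ t = v

end Multigraph

namespace Multigraph

/-- `Gnm n m k`: the multigraph obtained from a path `v_0, v_1, …, v_{n-1}` (terminals
`s = v_0`, `t = v_{n-1}`) by replacing the path edge from `v_k` to `v_{k+1}` by a bundle of
`m - n + 2` parallel edges (so that the graph has `m` edges in total when `m ≥ n - 1`). -/
def Gnm (n m k : ℕ) (hk : k < n - 1) : Multigraph where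
  V := Fin n
  E := Fin m
  ends e :=
    if h : e.val < n - 1 then
      s((⟨e.val, by omega⟩ : Fin n), (⟨e.val + 1, by omega⟩ : Fin n))
    else
      s((⟨k, by omega⟩ : Fin n), (⟨k + 1, by omega⟩ : Fin n))
  loopless e := by
    by_cases h : e.val < n - 1 <;>
      simp [h, Sym2.mk_isDiag_iff, Fin.ext_iff]

/-- The cycle on `n ≥ 2` vertices. -/
def cycleGraph (n : ℕ) (hn : 2 ≤ n) : Multigraph where
  V := Fin n
  E := Fin n
  ends e := s(e, (⟨(e.val + 1) % n, Nat.mod_lt _ (by omega)⟩ : Fin n))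
  loopless e := by
    simp only [Sym2.mk_isDiag_iff, Fin.ext_iff, Fin.val_mk]
    intro hc
    rcases Nat.lt_or_ge (e.val + 1) n with h' | h'
    · rw [Nat.mod_eq_of_lt h'] at hc; omega
    · have he : e.val + 1 = n := by have := e.isLt; omega
      rw [he, Nat.mod_self] at hc
      omega

/-- The multigraph obtained from `G` by adjoining a new vertex (`none`) joined by a single
new edge to the vertex `u` of `G`. -/
def addPendant (G : Multigraph) (u : G.V) : Multigraph where
  V := Option G.V
  E := Option G.E
  ends e := e.elim s(some u, none) (fun e' => (G.ends e').map some)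
  loopless e := by
    cases e with
    | none => simp [Sym2.mk_isDiag_iff]
    | some e' =>
        show ¬ ((G.ends e').map some).IsDiag
        rw [Sym2.isDiag_map (Option.some_injective _)]
        exact G.loopless e'

/-- The disjoint union of two multigraphs. -/
def disjSum (A B : Multigraph) : Multigraph where
  V := A.V ⊕ B.V
  E := A.E ⊕ B.E
  ends := Sum.elim (fun e => (A.ends e).map Sum.inl) (fun e => (B.ends e).map Sum.inr)
  loopless e := by
    cases e with
    | inl e =>
        show ¬ ((A.ends e).map Sum.inl).IsDiag
        rw [Sym2.isDiag_map Sum.inl_injective]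
        exact A.loopless e
    | inr e =>
        show ¬ ((B.ends e).map Sum.inr).IsDiag
        rw [Sym2.isDiag_map Sum.inr_injective]
        exact B.loopless e

/-- The multigraph on three vertices `0, 1, 2` with a bundle of `a` parallel edges between
`0` and `1` and a bundle of `b` parallel edges between `1` and `2`. -/
def doubleBundle (a b : ℕ) : Multigraph where
  V := Fin 3
  E := Fin (a + b)
  ends e := if e.val < a then s((0 : Fin 3), (1 : Fin 3)) else s((1 : Fin 3), (2 : Fin 3))
  loopless e := by
    by_cases h : e.val < a <;> simp [h, Sym2.mk_isDiag_iff]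

/-- The multigraph on three vertices `0, 1, 2` with bundles of `a`, `b`, `c` parallel edges
between `0,1`, between `1,2`, and between `2,0` respectively. -/
def tripleBundle (a b c : ℕ) : Multigraph where
  V := Fin 3
  E := Fin (a + b + c)
  ends e :=
    if e.val < a then s((0 : Fin 3), (1 : Fin 3))
    else if e.val < a + b then s((1 : Fin 3), (2 : Fin 3))
    else s((2 : Fin 3), (0 : Fin 3))
  loopless e := by
    by_cases h : e.val < a
    · simp [h, Sym2.mk_isDiag_iff]
    · by_cases h' : e.val < a + b <;> simp [h, h', Sym2.mk_isDiag_iff]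

/-- The multigraph obtained from a path `v_0, …, v_{n-1}` by replacing the path edge at
position `k₁` by a bundle of `2` parallel edges and the path edge at position `k₂` by a
bundle of `m - n + 1` parallel edges (for `m ≥ n`, `k₁ ≠ k₂`, the graph has `m` edges). -/
def Gnm2 (n m k₁ k₂ : ℕ) (hk₁ : k₁ < n - 1) (hk₂ : k₂ < n - 1) : Multigraph where
  V := Fin n
  E := Fin m
  ends e :=
    if h : e.val < n - 1 then
      s((⟨e.val, by omega⟩ : Fin n), (⟨e.val + 1, by omega⟩ : Fin n))
    else if e.val = n - 1 then
      s((⟨k₁, by omega⟩ : Fin n), (⟨k₁ + 1, by omega⟩ : Fin n))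
    else
      s((⟨k₂, by omega⟩ : Fin n), (⟨k₂ + 1, by omega⟩ : Fin n))
  loopless e := by
    by_cases h : e.val < n - 1
    · simp [h, Sym2.mk_isDiag_iff, Fin.ext_iff]
    · by_cases h' : e.val = n - 1 <;> simp [h, h', Sym2.mk_isDiag_iff, Fin.ext_iff]

/-- The simple graph on `n ≥ 4` vertices consisting of a path `s = v_0, …, v_{n-3} = t` of
length `n - 3` together with two further vertices `v_{n-2}, v_{n-1}` forming a triangle
with `t`. It has `n` vertices and `n` edges. -/
def triGraph (n : ℕ) (hn : 4 ≤ n) : Multigraph where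
  V := Fin n
  E := Fin n
  ends e :=
    if h : e.val < n - 3 then
      s((⟨e.val, by omega⟩ : Fin n), (⟨e.val + 1, by omega⟩ : Fin n))
    else if e.val = n - 3 then
      s((⟨n - 3, by omega⟩ : Fin n), (⟨n - 2, by omega⟩ : Fin n))
    else if e.val = n - 2 then
      s((⟨n - 2, by omega⟩ : Fin n), (⟨n - 1, by omega⟩ : Fin n))
    else
      s((⟨n - 1, by omega⟩ : Fin n), (⟨n - 3, by omega⟩ : Fin n))
  loopless e := by
    by_cases h : e.val < n - 3
    · simp [h, Sym2.mk_isDiag_iff, Fin.ext_iff]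
    · by_cases h' : e.val = n - 3
      · simp only [dif_neg h, if_pos h', Sym2.mk_isDiag_iff, Fin.mk.injEq]; omega
      · by_cases h'' : e.val = n - 2
        · simp only [dif_neg h, if_neg h', if_pos h'', Sym2.mk_isDiag_iff, Fin.mk.injEq]; omega
        · simp only [dif_neg h, if_neg h', if_neg h'', Sym2.mk_isDiag_iff, Fin.mk.injEq]; omega

end Multigraph

/-!
In a tree `T` with `n` vertices and `m = n - 1` edges every split state has exactly `m - 1`
edges: it cannot contain all edges, since `T` connects `s` and `t`, and adding an `s`–`t` edge
to it gives a connected graph, so it has at least `n - 2` edges. Hence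
`sRel(T) ≤ C(m, m-1) p^(m-1) (1-p)`. In the path with `s`, `t` at its ends, every set of
`m - 1` edges is a split state, so the path attains this bound.
-/

namespace Multigraph

section SplitReliability

variable (G : Multigraph) {s t : G.V}

lemma edgeSet_subgraph_subset (E' : Finset G.E) :
    (G.subgraph E').edgeSet ⊆ G.ends '' E' := by
  intro x hx
  induction x using Sym2.ind with
  | _ u v =>
    obtain ⟨-, e, he, hends⟩ := hx
    exact ⟨e, he, hends⟩

variable {G} in
lemma SplitState.ne {E' : Finset G.E} (h : G.SplitState s t E') : s ≠ t :=
  fun hst => h.1 (hst ▸ SimpleGraph.Reachable.refl s)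

lemma card_V_le_of_splitState {E' : Finset G.E} (h : G.SplitState s t E') :
    Fintype.card G.V ≤ E'.card + 2 := by
  set K := G.subgraph E' ⊔ SimpleGraph.edge s t
  have hK : K.Connected := by
    have hst : K.Adj t s := by
      simp [K, SimpleGraph.edge_adj, h.ne.symm]
    have hreach : ∀ w, K.Reachable w s := fun w =>
      (h.2 w).elim (·.mono le_sup_left) (fun hw => (hw.mono le_sup_left).trans hst.reachable)
    exact (SimpleGraph.connected_iff K).mpr
      ⟨fun u v => (hreach u).trans (hreach v).symm, ⟨s⟩⟩
  have hedges : K.edgeSet.ncard ≤ E'.card + 1 := calc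
    K.edgeSet.ncard ≤ (G.subgraph E').edgeSet.ncard + (SimpleGraph.edge s t).edgeSet.ncard := by
      rw [SimpleGraph.edgeSet_sup]
      exact Set.ncard_union_le _ _
    _ ≤ (G.ends '' E').ncard + ({s(s, t)} : Set (Sym2 G.V)).ncard :=
      add_le_add (Set.ncard_le_ncard (G.edgeSet_subgraph_subset E') (Set.toFinite _))
        (Set.ncard_le_ncard SimpleGraph.edgeSet_edge_subset)
    _ ≤ E'.card + 1 := by
      rw [Set.ncard_singleton]
      gcongr
      simpa using Set.ncard_image_le (f := G.ends) (s := (E' : Set G.E)) (Finset.finite_toSet E')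
  have := hK.card_vert_le_card_edgeSet_add_one
  rw [Nat.card_eq_fintype_card, Nat.card_coe_set_eq] at this
  omega

lemma card_eq_of_splitState (hG : G.Connected) (hV : Fintype.card G.V = Fintype.card G.E + 1)
    {E' : Finset G.E} (h : G.SplitState s t E') : E'.card = Fintype.card G.E - 1 := by
  have hne : E' ≠ Finset.univ := by
    rintro rfl
    exact h.1 (hG.preconnected s t)
  have hlt := Finset.card_lt_card (Finset.ssubset_univ_iff.mpr hne)
  have := G.card_V_le_of_splitState h
  rw [Finset.card_univ] at hlt
  omega

open scoped Classical in
lemma sRel_eq_sum_filter (p : ℝ) :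
    G.sRel s t p = ∑ E' ∈ Finset.univ.filter (G.SplitState s t),
      p ^ E'.card * (1 - p) ^ (Fintype.card G.E - E'.card) := by
  rw [sRel, Finset.sum_filter]

lemma sum_powersetCard_univ_eq_choose_mul (k : ℕ) (p : ℝ) :
    ∑ E' ∈ Finset.powersetCard k (Finset.univ : Finset G.E),
        p ^ E'.card * (1 - p) ^ (Fintype.card G.E - E'.card) =
      (Fintype.card G.E).choose k * (p ^ k * (1 - p) ^ (Fintype.card G.E - k)) := by
  rw [Finset.sum_congr rfl fun E' hE' => by rw [(Finset.mem_powersetCard.mp hE').2],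
    Finset.sum_const, Finset.card_powersetCard, Finset.card_univ, nsmul_eq_mul]

lemma sRel_le_of_splitState_card_eq {p : ℝ} (hp0 : 0 ≤ p) (hp1 : p ≤ 1) {k : ℕ}
    (h : ∀ E', G.SplitState s t E' → E'.card = k) :
    G.sRel s t p ≤ (Fintype.card G.E).choose k * (p ^ k * (1 - p) ^ (Fintype.card G.E - k)) := by
  classical
  rw [sRel_eq_sum_filter, ← sum_powersetCard_univ_eq_choose_mul]
  refine Finset.sum_le_sum_of_subset_of_nonneg (fun E' hE' => ?_) fun _ _ _ => ?_
  · exact Finset.mem_powersetCard_univ.mpr (h E' (Finset.mem_filter.mp hE').2)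
  · exact mul_nonneg (pow_nonneg hp0 _) (pow_nonneg (sub_nonneg.mpr hp1) _)

lemma le_sRel_of_card_eq_splitState {p : ℝ} (hp0 : 0 ≤ p) (hp1 : p ≤ 1) {k : ℕ}
    (h : ∀ E' : Finset G.E, E'.card = k → G.SplitState s t E') :
    (Fintype.card G.E).choose k * (p ^ k * (1 - p) ^ (Fintype.card G.E - k)) ≤ G.sRel s t p := by
  classical
  rw [sRel_eq_sum_filter, ← sum_powersetCard_univ_eq_choose_mul]
  refine Finset.sum_le_sum_of_subset_of_nonneg (fun E' hE' => ?_) fun _ _ _ => ?_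
  · exact Finset.mem_filter.mpr ⟨Finset.mem_univ _, h E' (Finset.mem_powersetCard_univ.mp hE')⟩
  · exact mul_nonneg (pow_nonneg hp0 _) (pow_nonneg (sub_nonneg.mpr hp1) _)

end SplitReliability

lemma Gnm_ends_of_lt {n m k : ℕ} (hk : k < n - 1) (e : Fin m) (he : e.val < n - 1) :
    (Gnm n m k hk).ends e = s(⟨e, by omega⟩, ⟨e + 1, by omega⟩) :=
  dif_pos he

lemma card_E_Gnm {n m k : ℕ} (hk : k < n - 1) : Fintype.card (Gnm n m k hk).E = m :=
  Fintype.card_fin m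

section Path

variable {n : ℕ} (hn : 0 < n - 1) {E' : Finset (Fin (n - 1))}

lemma path_reachable_of_forall_mem {a b : ℕ} (hab : a ≤ b) (hb : b < n)
    (h : ∀ e : Fin (n - 1), a ≤ e.val → e.val < b → e ∈ E') :
    ((Gnm n (n - 1) 0 hn).subgraph E').Reachable ⟨a, by omega⟩ ⟨b, hb⟩ := by
  induction b, hab using Nat.le_induction with
  | base => rfl
  | succ b hab ih =>
    refine (ih (by omega) fun e h₁ h₂ => h e h₁ (by omega)).trans
      (SimpleGraph.Adj.reachable ⟨Fin.ne_of_val_ne (Nat.succ_ne_self b).symm, ⟨b, by omega⟩,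
        h _ hab (Nat.lt_succ_self b), ?_⟩)
    exact Gnm_ends_of_lt hn _ (show b < n - 1 by omega)

lemma path_le_iff_of_walk {j : Fin (n - 1)} (hj : j ∉ E') {u v : Fin n}
    (w : ((Gnm n (n - 1) 0 hn).subgraph E').Walk u v) : u.val ≤ j ↔ v.val ≤ j := by
  induction w with
  | nil => rfl
  | @cons x y _ hadj _ ih =>
    obtain ⟨-, ⟨i, hi⟩, he, hends⟩ := hadj
    have hij : i ≠ j := by rintro rfl; exact hj he
    rw [← ih]
    rcases Sym2.eq_iff.mp ((Gnm_ends_of_lt hn _ hi).symm.trans hends) with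
      ⟨hx, hy⟩ | ⟨hx, hy⟩
    all_goals
      have hx := congrArg Fin.val hx
      have hy := congrArg Fin.val hy
      simp only at hx hy
      omega

lemma path_splitState_of_card (hE' : E'.card = n - 1 - 1) :
    (Gnm n (n - 1) 0 hn).SplitState ⟨0, by omega⟩ ⟨n - 1, by omega⟩ E' := by
  obtain ⟨j, hj⟩ : ∃ j, E'ᶜ = {j} := by
    rw [← Finset.card_eq_one, Finset.card_compl, Fintype.card_fin]
    omega
  have hjE : j ∉ E' := Finset.mem_compl.mp (hj ▸ Finset.mem_singleton_self j)
  have hmem : ∀ e, e ≠ j → e ∈ E' := fun e he =>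
    Finset.mem_compl.not_left.mp (hj ▸ Finset.notMem_singleton.mpr he)
  refine ⟨fun ⟨w⟩ => ?_, fun v => ?_⟩
  · have := (path_le_iff_of_walk hn hjE w).mp (Nat.zero_le _)
    simp only at this
    omega
  · by_cases hv : v.val ≤ j
    · exact .inl (path_reachable_of_forall_mem hn (Nat.zero_le _) v.isLt
        fun e _ he => hmem e (by rintro rfl; omega)).symm
    · exact .inr (path_reachable_of_forall_mem hn (by omega) (by omega)
        fun e he _ => hmem e (by rintro rfl; omega))

lemma path_connected : (Gnm n (n - 1) 0 hn).Connected := by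
  have hreach (v : Fin n) :
      ((Gnm n (n - 1) 0 hn).subgraph Finset.univ).Reachable ⟨0, by omega⟩ v :=
    path_reachable_of_forall_mem hn (Nat.zero_le _) v.isLt fun e _ _ => Finset.mem_univ e
  exact (SimpleGraph.connected_iff _).mpr
    ⟨fun u v => (hreach u).symm.trans (hreach v), ⟨⟨0, by omega⟩⟩⟩

end Path

end Multigraph

/-- For every `n ≥ 3`, the path on `n` vertices with terminals the two
endpoints of the path is an optimal `(n,n-1)`-graph: in particular its split reliability is
at least that of any tree (= connected `(n,n-1)`-graph) with any terminals, for all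
`p ∈ (0,1)`. -/
theorem path_isOptimal (n : ℕ) (hn : 3 ≤ n) :
    Multigraph.IsOptimal n (n - 1) (Multigraph.Gnm n (n - 1) 0 (by omega))
      (⟨0, by omega⟩ : Fin n) (⟨n - 1, by omega⟩ : Fin n) := by
  refine ⟨Multigraph.path_connected _, Fintype.card_fin n, Multigraph.card_E_Gnm _,
    Fin.ne_of_val_ne (show 0 ≠ n - 1 by omega), fun H s' t' hH hV hE _ p hp0 hp1 => ?_⟩
  have hupper := H.sRel_le_of_splitState_card_eq (s := s') (t := t') hp0.le hp1.le
    fun _ => H.card_eq_of_splitState hH (by omega)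
  have hlower := (Multigraph.Gnm n (n - 1) 0 (by omega)).le_sRel_of_card_eq_splitState
    (s := ⟨0, by omega⟩) (t := ⟨n - 1, by omega⟩) hp0.le hp1.le
    fun _ => Multigraph.path_splitState_of_card _
  rw [hE] at hupper
  rw [Multigraph.card_E_Gnm] at hlower
  exact hupper.trans hlower
end

section
/- For every m ≥ 2 there is an optimal (3,m)-graph; specifically, the multigraph G_{3,m} consisting of a path s, v, t in which one of the two path edges is replaced by a bundle of m-1 parallel edges, with terminals s and t, satisfies sRel(G_{3,m},s,t;p) ≥ sRel(H,s',t';p) for every connected finite loopless multigraph H with 3 vertices and m edges, every pair of distinct terminals s',t' of H, and every p ∈ (0,1). -/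
/-!
On three vertices `s, t, w`, a spanning subgraph splits `s` from `t` exactly when its edge set is
nonempty and consists only of `s`–`w` edges or only of `w`–`t` edges. Writing `a`, `b` for the
numbers of such edges and `q = 1 - p`, this gives `sRel = q ^ (m - a) + q ^ (m - b) - 2 q ^ m`.
Connectivity forces `a, b < m`, and `a + b ≤ m`; among exponents `x, y ≥ 1` with `x + y ≥ m`,
`q ^ x + q ^ y` is largest for `{x, y} = {1, m - 1}`, which is `G_{3,m}` (`a = 1`, `b = m - 1`).
-/

open Finset

theorem pow_add_pow_le_pow_sub_one_add {q : ℝ} (hq0 : 0 ≤ q) (hq1 : q ≤ 1) {m x y : ℕ}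
    (hx : 1 ≤ x) (hy : 1 ≤ y) (hxy : m ≤ x + y) : q ^ x + q ^ y ≤ q ^ (m - 1) + q := by
  wlog hle : x ≤ y generalizing x y
  · rw [add_comm]
    exact this hy hx (by omega) (by omega)
  have anti : ∀ {i j : ℕ}, i ≤ j → q ^ j ≤ q ^ i := pow_le_pow_of_le_one hq0 hq1
  rcases le_or_gt m y with hmy | hym
  · have hy1 := anti (show m - 1 ≤ y by omega)
    have hx1 := anti hx
    rw [pow_one] at hx1
    linarith
  obtain ⟨k, rfl⟩ : ∃ k, x = k + 1 := ⟨x - 1, by omega⟩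
  have hy' : q ^ y ≤ q ^ (m - (k + 1)) := anti (by omega)
  have hq : q ^ (m - (k + 1)) ≤ q := by simpa using anti (show 1 ≤ m - (k + 1) by omega)
  have hk : q ^ k ≤ 1 := pow_le_one₀ hq0 hq1
  rw [show q ^ (m - 1) = q ^ k * q ^ (m - (k + 1)) by rw [← pow_add]; congr 1; omega, pow_succ]
  -- q ^ (m - 1) + q - q ^ x - q ^ (m - x) = (1 - q ^ (x - 1)) * (q - q ^ (m - x))
  nlinarith [mul_nonneg (sub_nonneg.2 hk) (sub_nonneg.2 hq)]

theorem sum_powerset_pow_mul_one_sub_pow {R ι : Type*} [CommRing R] [Fintype ι] (p : R)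
    (S : Finset ι) :
    ∑ T ∈ S.powerset, p ^ #T * (1 - p) ^ (Fintype.card ι - #T) =
      (1 - p) ^ (Fintype.card ι - #S) := by
  have hS : #S ≤ Fintype.card ι := card_le_univ S
  calc ∑ T ∈ S.powerset, p ^ #T * (1 - p) ^ (Fintype.card ι - #T)
      = (1 - p) ^ (Fintype.card ι - #S) * ∑ T ∈ S.powerset, p ^ #T * (1 - p) ^ (#S - #T) := by
        rw [mul_sum]
        refine sum_congr rfl fun T hT => ?_
        have hT : #T ≤ #S := card_le_card (mem_powerset.1 hT)
        rw [show Fintype.card ι - #T = (Fintype.card ι - #S) + (#S - #T) by omega, pow_add]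
        ring
    _ = (1 - p) ^ (Fintype.card ι - #S) := by
        rw [sum_pow_mul_eq_add_pow, add_sub_cancel, one_pow, mul_one]

theorem exists_forall_eq_or_eq_or_eq_of_card_eq_three {V : Type*} [Fintype V] [DecidableEq V]
    (hV : Fintype.card V = 3) {s t : V} (hst : s ≠ t) :
    ∃ w, s ≠ w ∧ t ≠ w ∧ ∀ v, v = s ∨ v = t ∨ v = w := by
  obtain ⟨w, hw⟩ := card_eq_one.1 (show #({s, t}ᶜ : Finset V) = 1 by
    rw [card_compl, card_pair hst, hV])
  have hmem : ∀ v, v ≠ s ∧ v ≠ t ↔ v = w := fun v => by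
    rw [← mem_singleton, ← hw]
    simp
  obtain ⟨hws, hwt⟩ := (hmem w).2 rfl
  refine ⟨w, hws.symm, hwt.symm, fun v => ?_⟩
  have := hmem v
  tauto

namespace Multigraph

def edgesBetween (G : Multigraph) (u v : G.V) : Finset G.E :=
  univ.filter fun e => G.ends e = s(u, v)

@[simp]
lemma mem_edgesBetween {G : Multigraph} {u v : G.V} {e : G.E} :
    e ∈ G.edgesBetween u v ↔ G.ends e = s(u, v) := by
  simp [edgesBetween]

lemma disjoint_edgesBetween (G : Multigraph) {u v w : G.V} (huw : u ≠ w) :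
    Disjoint (G.edgesBetween u v) (G.edgesBetween v w) := by
  refine disjoint_left.2 fun e hu hw => huw ?_
  have := (mem_edgesBetween.1 hu).symm.trans (mem_edgesBetween.1 hw)
  rw [Sym2.eq_iff] at this
  rcases this with ⟨rfl, rfl⟩ | ⟨rfl, -⟩ <;> rfl

lemma card_edgesBetween_add_card_edgesBetween_le (G : Multigraph) {u v w : G.V} (huw : u ≠ w) :
    #(G.edgesBetween u v) + #(G.edgesBetween v w) ≤ Fintype.card G.E :=
  (card_union_of_disjoint (G.disjoint_edgesBetween huw)).symm.le.trans (card_le_univ _)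

lemma card_edgesBetween_lt (G : Multigraph) {u v x : G.V} {e : G.E} (hx : x ∈ G.ends e)
    (hxu : x ≠ u) (hxv : x ≠ v) : #(G.edgesBetween u v) < Fintype.card G.E := by
  refine card_lt_univ_of_notMem (x := e) fun he => ?_
  rw [mem_edgesBetween.1 he, Sym2.mem_iff] at hx
  tauto

lemma exists_mem_ends_of_connected {G : Multigraph} (hG : G.Connected) {u v : G.V}
    (huv : u ≠ v) : ∃ e, u ∈ G.ends e := by
  obtain ⟨w⟩ := hG.preconnected u v
  cases w with
  | nil => exact absurd rfl huv
  | cons h _ =>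
    obtain ⟨-, e, -, he⟩ := h
    exact ⟨e, he ▸ Sym2.mem_mk_left _ _⟩

lemma reachable_of_ends_eq {G : Multigraph} {E' : Finset G.E} {e : G.E} (he : e ∈ E')
    {u v : G.V} (huv : u ≠ v) (hends : G.ends e = s(u, v)) : (G.subgraph E').Reachable u v :=
  SimpleGraph.Adj.reachable ⟨huv, e, he, hends⟩

lemma eq_of_reachable_of_forall_notMem {G : Multigraph} {E' : Finset G.E} {u v : G.V}
    (hu : ∀ e ∈ E', u ∉ G.ends e) (h : (G.subgraph E').Reachable u v) : v = u := by
  obtain ⟨w⟩ := h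
  cases w with
  | nil => rfl
  | cons h _ =>
    obtain ⟨-, e, he, hends⟩ := h
    exact absurd (hends ▸ Sym2.mem_mk_left _ _) (hu e he)

lemma splitState_comm {G : Multigraph} {s t : G.V} {E' : Finset G.E} :
    G.SplitState s t E' ↔ G.SplitState t s E' := by
  simp only [SplitState, SimpleGraph.reachable_comm (u := s), or_comm]

lemma splitState_of_forall_notMem {G : Multigraph} {s t : G.V} {E' : Finset G.E} (hst : s ≠ t)
    (ht : ∀ e ∈ E', t ∉ G.ends e) (hs : ∀ v, v ≠ t → (G.subgraph E').Reachable v s) :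
    G.SplitState s t E' := by
  refine ⟨fun h => hst (eq_of_reachable_of_forall_notMem ht h.symm), fun v => ?_⟩
  by_cases hv : v = t
  · exact Or.inr (hv ▸ SimpleGraph.Reachable.refl _)
  · exact Or.inl (hs v hv)

section ThreeVertices

variable {H : Multigraph} {s t w : H.V}

lemma ends_eq_of_forall_eq (hcov : ∀ v, v = s ∨ v = t ∨ v = w) (e : H.E) :
    H.ends e = s(s, t) ∨ H.ends e = s(s, w) ∨ H.ends e = s(w, t) := by
  have hl := H.loopless e
  generalize H.ends e = z at hl ⊢
  induction z using Sym2.ind with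
  | _ u v =>
    rw [Sym2.mk_isDiag_iff] at hl
    rcases hcov u with rfl | rfl | rfl <;> rcases hcov v with rfl | rfl | rfl <;>
      simp_all [Sym2.eq_swap]

variable (hst : s ≠ t) (hsw : s ≠ w) (htw : t ≠ w) (hcov : ∀ v, v = s ∨ v = t ∨ v = w)
include hst hsw htw hcov

lemma splitState_iff_of_forall_eq (E' : Finset H.E) :
    H.SplitState s t E' ↔
      E' ≠ ∅ ∧ (E' ⊆ H.edgesBetween s w ∨ E' ⊆ H.edgesBetween w t) := by
  constructor
  · rintro ⟨hst', hcomp⟩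
    refine ⟨?_, ?_⟩
    · rintro rfl
      have hw : ∀ e ∈ (∅ : Finset H.E), w ∉ H.ends e := by simp
      rcases hcomp w with h | h
      · exact hsw (eq_of_reachable_of_forall_notMem hw h)
      · exact htw (eq_of_reachable_of_forall_notMem hw h)
    · by_contra! h
      simp only [not_subset, mem_edgesBetween] at h
      obtain ⟨⟨e, he, heA⟩, f, hf, hfB⟩ := h
      apply hst'
      rcases ends_eq_of_forall_eq hcov e with he' | he' | he'
      · exact reachable_of_ends_eq he hst he'
      · exact absurd he' heA
      rcases ends_eq_of_forall_eq hcov f with hf' | hf' | hf'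
      · exact reachable_of_ends_eq hf hst hf'
      · exact (reachable_of_ends_eq hf hsw hf').trans (reachable_of_ends_eq he htw.symm he')
      · exact absurd hf' hfB
  · rintro ⟨hne, hA | hB⟩ <;> obtain ⟨e, he⟩ := nonempty_iff_ne_empty.2 hne
    · refine splitState_of_forall_notMem hst (fun f hf ht => ?_) fun v hv => ?_
      · rw [mem_edgesBetween.1 (hA hf), Sym2.mem_iff] at ht
        tauto
      · rcases hcov v with rfl | rfl | rfl
        · rfl
        · exact absurd rfl hv
        · exact (reachable_of_ends_eq he hsw (mem_edgesBetween.1 (hA he))).symm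
    · refine splitState_comm.2 (splitState_of_forall_notMem hst.symm (fun f hf hs => ?_)
        fun v hv => ?_)
      · rw [mem_edgesBetween.1 (hB hf), Sym2.mem_iff] at hs
        tauto
      · rcases hcov v with rfl | rfl | rfl
        · exact absurd rfl hv
        · rfl
        · exact reachable_of_ends_eq he htw.symm (mem_edgesBetween.1 (hB he))

lemma sRel_eq_of_forall_eq (p : ℝ) :
    H.sRel s t p = (1 - p) ^ (Fintype.card H.E - #(H.edgesBetween s w))
      + (1 - p) ^ (Fintype.card H.E - #(H.edgesBetween w t)) - 2 * (1 - p) ^ Fintype.card H.E := by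
  classical
  have hdisj := H.disjoint_edgesBetween (v := w) hst
  have hsplit : univ.filter (H.SplitState s t) =
      (H.edgesBetween s w).powerset.erase ∅ ∪ (H.edgesBetween w t).powerset.erase ∅ := by
    ext E'
    simp only [mem_filter, mem_univ, true_and, mem_union, mem_erase, mem_powerset,
      splitState_iff_of_forall_eq hst hsw htw hcov]
    tauto
  have hsubsets_disj : Disjoint ((H.edgesBetween s w).powerset.erase ∅)
      ((H.edgesBetween w t).powerset.erase ∅) := by
    refine disjoint_left.2 fun T hA hB => (mem_erase.1 hA).1 ?_
    exact disjoint_self.1 (hdisj.mono (mem_powerset.1 (mem_erase.1 hA).2)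
      (mem_powerset.1 (mem_erase.1 hB).2))
  rw [sRel, ← sum_filter, hsplit, sum_union hsubsets_disj,
    sum_erase_eq_sub (empty_mem_powerset _), sum_erase_eq_sub (empty_mem_powerset _),
    sum_powerset_pow_mul_one_sub_pow, sum_powerset_pow_mul_one_sub_pow]
  simp only [card_empty, pow_zero, one_mul, Nat.sub_zero]
  ring

end ThreeVertices

section Gnm3

variable {m : ℕ}

lemma Gnm_three_ends (e : Fin m) :
    (Gnm 3 m 1 Nat.one_lt_two).ends e = if e.val = 0 then s((0 : Fin 3), 1) else s(1, 2) := by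
  unfold Gnm
  dsimp only
  split_ifs with h h0 h0
  · simp [h0]
  · simp only [show e.val = 1 by omega]; rfl
  · omega
  · rfl

lemma mem_edgesBetween_Gnm_three_left (e : Fin m) :
    e ∈ (Gnm 3 m 1 Nat.one_lt_two).edgesBetween (0 : Fin 3) (1 : Fin 3) ↔ e.val = 0 := by
  refine mem_edgesBetween.trans ?_
  rw [Gnm_three_ends]
  split_ifs with h
  · exact iff_of_true rfl h
  · exact iff_of_false (by decide : s((1 : Fin 3), 2) ≠ s(0, 1)) h

lemma mem_edgesBetween_Gnm_three_right (e : Fin m) :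
    e ∈ (Gnm 3 m 1 Nat.one_lt_two).edgesBetween (1 : Fin 3) (2 : Fin 3) ↔ e.val ≠ 0 := by
  refine mem_edgesBetween.trans ?_
  rw [Gnm_three_ends]
  split_ifs with h
  · exact iff_of_false (by decide : s((0 : Fin 3), 1) ≠ s(1, 2)) (not_not.2 h)
  · exact iff_of_true rfl h

lemma Gnm_three_connected (hm : 2 ≤ m) : (Gnm 3 m 1 Nat.one_lt_two).Connected := by
  have h : ∀ v : Fin 3, ((Gnm 3 m 1 Nat.one_lt_two).subgraph univ).Reachable v (1 : Fin 3) := by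
    intro v
    fin_cases v
    · exact reachable_of_ends_eq (e := (⟨0, by omega⟩ : Fin m)) (mem_univ _)
        (by decide : (0 : Fin 3) ≠ 1) (by rw [Gnm_three_ends]; rfl)
    · rfl
    · exact (reachable_of_ends_eq (e := (⟨1, by omega⟩ : Fin m)) (mem_univ _)
        (by decide : (1 : Fin 3) ≠ 2) (by rw [Gnm_three_ends]; rfl)).symm
  exact (SimpleGraph.connected_iff _).2 ⟨fun u v => (h u).trans (h v).symm, ⟨(0 : Fin 3)⟩⟩

lemma sRel_Gnm_three (hm : 1 ≤ m) (p : ℝ) :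
    (Gnm 3 m 1 Nat.one_lt_two).sRel (0 : Fin 3) (2 : Fin 3) p =
      (1 - p) ^ (m - 1) + (1 - p) - 2 * (1 - p) ^ m := by
  have hleft : #((Gnm 3 m 1 Nat.one_lt_two).edgesBetween (0 : Fin 3) (1 : Fin 3)) = 1 := by
    refine card_eq_one.2 ⟨(⟨0, hm⟩ : Fin m), eq_singleton_iff_unique_mem.2 ⟨?_, ?_⟩⟩
    · exact (mem_edgesBetween_Gnm_three_left _).2 rfl
    · exact fun e he => Fin.ext ((mem_edgesBetween_Gnm_three_left e).1 he)
  have hE : Fintype.card (Gnm 3 m 1 Nat.one_lt_two).E = m := Fintype.card_fin m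
  have hright : #((Gnm 3 m 1 Nat.one_lt_two).edgesBetween (1 : Fin 3) (2 : Fin 3)) = m - 1 := by
    have : (Gnm 3 m 1 Nat.one_lt_two).edgesBetween (1 : Fin 3) (2 : Fin 3) =
        ((Gnm 3 m 1 Nat.one_lt_two).edgesBetween (0 : Fin 3) (1 : Fin 3))ᶜ :=
      ext fun e => (mem_edgesBetween_Gnm_three_right e).trans
        ((mem_edgesBetween_Gnm_three_left e).not.symm.trans mem_compl.symm)
    rw [this, card_compl, hleft, hE]
  refine (sRel_eq_of_forall_eq (w := (1 : Fin 3)) (by decide : (0 : Fin 3) ≠ 2)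
    (by decide : (0 : Fin 3) ≠ 1) (by decide : (2 : Fin 3) ≠ 1)
    (by decide : ∀ v : Fin 3, v = 0 ∨ v = 2 ∨ v = 1) p).trans ?_
  rw [hleft, hright, hE, Nat.sub_sub_self hm, pow_one]

end Gnm3

end Multigraph

/-- For every `m ≥ 2`, the graph `G_{3,m}` (a path `s, v, t` with one of the
two path edges replaced by a bundle of `m-1` parallel edges), with terminals the two
endpoints, is an optimal `(3,m)`-graph. -/
theorem optimal_three (m : ℕ) (hm : 2 ≤ m) :
    Multigraph.IsOptimal 3 m (Multigraph.Gnm 3 m 1 (by omega))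
      (⟨0, by omega⟩ : Fin 3) (⟨2, by omega⟩ : Fin 3) := by
  refine ⟨Multigraph.Gnm_three_connected hm, Fintype.card_fin 3, Fintype.card_fin m,
    (by decide : (0 : Fin 3) ≠ 2), fun H s t hH hV hE hst p hp0 hp1 => ?_⟩
  obtain ⟨w, hsw, htw, hcov⟩ := exists_forall_eq_or_eq_or_eq_of_card_eq_three hV hst
  obtain ⟨es, hes⟩ := Multigraph.exists_mem_ends_of_connected hH hst
  obtain ⟨et, het⟩ := Multigraph.exists_mem_ends_of_connected hH hst.symm
  have hA := H.card_edgesBetween_lt het hst.symm htw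
  have hB := H.card_edgesBetween_lt hes hsw hst
  have hAB := H.card_edgesBetween_add_card_edgesBetween_le (v := w) hst
  rw [hE] at hA hB hAB
  have key := pow_add_pow_le_pow_sub_one_add (sub_nonneg.2 hp1.le) (sub_le_self 1 hp0.le)
    (show 1 ≤ m - #(H.edgesBetween s w) by omega) (show 1 ≤ m - #(H.edgesBetween w t) by omega)
    (show m ≤ (m - #(H.edgesBetween s w)) + (m - #(H.edgesBetween w t)) by omega)
  calc H.sRel s t p
      = (1 - p) ^ (m - #(H.edgesBetween s w)) + (1 - p) ^ (m - #(H.edgesBetween w t))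
          - 2 * (1 - p) ^ m := by rw [Multigraph.sRel_eq_of_forall_eq hst hsw htw hcov, hE]
    _ ≤ (1 - p) ^ (m - 1) + (1 - p) - 2 * (1 - p) ^ m := by linarith
    _ = _ := (Multigraph.sRel_Gnm_three (by omega) p).symm
end

section
/- If C_n is the cycle on n ≥ 3 vertices and s,t are distinct vertices of C_n at distance k (the shorter arc between s and t has k edges), then for all p ∈ [0,1], sRel(C_n,s,t;p) = k(n-k)·p^{n-2}(1-p)^2. -/
/-!
Rotating the cycle by `-s` moves `s` to `0`; an isomorphism of multigraphs preserves split
reliability and distances, so we may assume `s = 0` and that `t` sits at position `d`. Deleting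
an edge `a < d` and an edge `b ≥ d` splits the cycle into the arc `(a, b]`, which contains `t`,
and its complement, which contains `0`. Conversely a split state must miss an edge on each of
the two arcs between `0` and `t`, and a third missing edge would cut off an arc containing
neither terminal. So the split states are exactly the `d (n - d)` complements `{a, b}ᶜ`, each of
size `n - 2`, and `d (n - d) = k (n - k)` because `k = min d (n - d)`.
-/

theorem Fin.val_add_one_cases {n : ℕ} [NeZero n] (i : Fin n) :
    (i + 1).val = i.val + 1 ∨ (i.val + 1 = n ∧ (i + 1).val = 0) := by
  rw [Fin.val_add, Fin.val_one', Nat.add_mod_mod]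
  rcases Nat.lt_or_ge (i.val + 1) n with h | h
  · exact Or.inl (Nat.mod_eq_of_lt h)
  · have h : i.val + 1 = n := by omega
    exact Or.inr ⟨h, by rw [h, Nat.mod_self]⟩

theorem Fin.mk_val_add_one_mod {n : ℕ} [NeZero n] (i : Fin n) (h : (i.val + 1) % n < n) :
    (⟨(i.val + 1) % n, h⟩ : Fin n) = i + 1 :=
  Fin.ext (by rw [Fin.val_add, Fin.val_one', Nat.add_mod_mod])

theorem Finset.injOn_pair_Iio_prod_Ici {α : Type*} [LinearOrder α] (t : α) :
    Set.InjOn (fun ab : α × α => ({ab.1, ab.2} : Finset α)) (Set.Iio t ×ˢ Set.Ici t) := by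
  rintro ⟨a, b⟩ ⟨ha, hb⟩ ⟨a', b'⟩ ⟨ha', hb'⟩ h
  simp only [Set.mem_Iio, Set.mem_Ici] at ha hb ha' hb'
  rw [← Finset.coe_inj, Finset.coe_pair, Finset.coe_pair, Set.pair_eq_pair_iff] at h
  rcases h with ⟨rfl, rfl⟩ | ⟨rfl, rfl⟩
  · rfl
  · exact absurd (hb.trans_lt ha') (lt_irrefl _)

theorem Nat.min_mul_sub_min {n d : ℕ} (hd : d ≤ n) :
    min d (n - d) * (n - min d (n - d)) = d * (n - d) := by
  rcases min_choice d (n - d) with h | h <;> rw [h]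
  rw [Nat.sub_sub_self hd, Nat.mul_comm]

namespace SimpleGraph

variable {V V' : Type*} {G : SimpleGraph V} {G' : SimpleGraph V'}

theorem Reachable.iff_of_adj_iff {P : V → Prop} (hP : ∀ x y, G.Adj x y → (P x ↔ P y))
    {u v : V} (h : G.Reachable u v) : P u ↔ P v := by
  obtain ⟨w⟩ := h
  induction w with
  | nil => rfl
  | cons hadj _ ih => exact (hP _ _ hadj).trans ih

theorem Walk.le_add_length {f : V → ℕ} (hf : ∀ x y, G.Adj x y → f y ≤ f x + 1) {u v : V}
    (w : G.Walk u v) : f v ≤ f u + w.length := by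
  induction w with
  | nil => simp
  | cons hadj _ ih =>
    have := hf _ _ hadj
    rw [Walk.length_cons]
    omega

theorem dist_map_le (f : G →g G') {u v : V} (h : G.Reachable u v) :
    G'.dist (f u) (f v) ≤ G.dist u v := by
  obtain ⟨w, hw⟩ := h.exists_walk_length_eq_dist
  exact (dist_le (w.map f)).trans_eq (by rw [Walk.length_map, hw])

theorem Iso.dist_eq (e : G ≃g G') (u v : V) : G'.dist (e u) (e v) = G.dist u v := by
  by_cases h : G.Reachable u v
  · refine le_antisymm (dist_map_le e.toHom h) ?_
    simpa using dist_map_le e.symm.toHom (e.reachable_iff.2 h)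
  · rw [dist_eq_zero_of_not_reachable h, dist_eq_zero_of_not_reachable (mt e.reachable_iff.1 h)]

end SimpleGraph

namespace Multigraph

variable {G H : Multigraph}

def subgraphIso (φ : G.V ≃ H.V) (ψ : G.E ≃ H.E) (hends : ∀ e, H.ends (ψ e) = (G.ends e).map φ)
    (E' : Finset G.E) : G.subgraph E' ≃g H.subgraph (E'.map ψ.toEmbedding) where
  toEquiv := φ
  map_rel_iff' {u v} := by
    simp only [subgraph, Finset.mem_map, Equiv.coe_toEmbedding, exists_exists_and_eq_and, hends,
      ← Sym2.map_mk, (Sym2.map.injective φ.injective).eq_iff, φ.injective.ne_iff]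

theorem splitState_map_iff (φ : G.V ≃ H.V) (ψ : G.E ≃ H.E)
    (hends : ∀ e, H.ends (ψ e) = (G.ends e).map φ) {s t : G.V} {E' : Finset G.E} :
    H.SplitState (φ s) (φ t) (E'.map ψ.toEmbedding) ↔ G.SplitState s t E' := by
  have hreach : ∀ x y, (H.subgraph (E'.map ψ.toEmbedding)).Reachable (φ x) (φ y) ↔
      (G.subgraph E').Reachable x y :=
    fun _ _ => SimpleGraph.Iso.reachable_iff (φ := subgraphIso φ ψ hends E')
  rw [SplitState, SplitState, ← φ.forall_congr_right]
  simp only [hreach]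

theorem IsoTerm.sRel_eq {s t : G.V} {u v : H.V} (h : IsoTerm G H s t u v) (p : ℝ) :
    G.sRel s t p = H.sRel u v p := by
  obtain ⟨φ, ψ, hends, rfl, rfl⟩ := h
  refine Fintype.sum_equiv ψ.finsetCongr _ _ fun E' => ?_
  rw [Equiv.finsetCongr_apply, Finset.card_map, Fintype.card_congr ψ]
  congr 1
  exact propext (splitState_map_iff φ ψ hends).symm

theorem IsoTerm.dist_eq {s t : G.V} {u v : H.V} (h : IsoTerm G H s t u v) :
    (H.subgraph Finset.univ).dist u v = (G.subgraph Finset.univ).dist s t := by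
  obtain ⟨φ, ψ, hends, rfl, rfl⟩ := h
  calc (H.subgraph Finset.univ).dist (φ s) (φ t)
      = (H.subgraph (Finset.univ.map ψ.toEmbedding)).dist (φ s) (φ t) := by
        rw [Finset.map_univ_equiv]
    _ = _ := SimpleGraph.Iso.dist_eq (subgraphIso φ ψ hends Finset.univ) s t

end Multigraph

section CycleSubgraph

open Fin.NatCast

variable {n : ℕ} [NeZero n]

def cycleSubgraph (n : ℕ) [NeZero n] (E' : Finset (Fin n)) : SimpleGraph (Fin n) :=
  SimpleGraph.fromRel fun u v => u ∈ E' ∧ v = u + 1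

variable {E' : Finset (Fin n)}

theorem cycleSubgraph_adj_add_one (hn : 2 ≤ n) {e : Fin n} (he : e ∈ E') :
    (cycleSubgraph n E').Adj e (e + 1) := by
  have := Fin.val_add_one_cases e
  refine (SimpleGraph.fromRel_adj _ _ _).2 ⟨fun h => ?_, Or.inl ⟨he, rfl⟩⟩
  rw [Fin.ext_iff] at h
  omega

theorem exists_walk_cycleSubgraph (hn : 2 ≤ n) {i j : ℕ} (hij : i ≤ j)
    (h : ∀ m, i ≤ m → m < j → (m : Fin n) ∈ E') :
    ∃ w : (cycleSubgraph n E').Walk i j, w.length = j - i := by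
  induction j, hij using Nat.le_induction with
  | base => exact ⟨.nil, by simp⟩
  | succ j hij ih =>
    obtain ⟨w, hw⟩ := ih fun m hm hmj => h m hm (by omega)
    have hadj : (cycleSubgraph n E').Adj j (j + 1 : ℕ) := by
      rw [Nat.cast_succ]
      exact cycleSubgraph_adj_add_one hn (h j hij (by omega))
    exact ⟨w.concat hadj, by rw [SimpleGraph.Walk.length_concat, hw]; omega⟩

theorem reachable_cycleSubgraph (hn : 2 ≤ n) {i j : ℕ} (hij : i ≤ j)
    (h : ∀ m, i ≤ m → m < j → (m : Fin n) ∈ E') :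
    (cycleSubgraph n E').Reachable i j :=
  ⟨(exists_walk_cycleSubgraph hn hij h).choose⟩

theorem cycleSubgraph_mem_Ioc_iff_of_reachable {a b u v : Fin n} (ha : a ∉ E') (hb : b ∉ E')
    (h : (cycleSubgraph n E').Reachable u v) : u ∈ Set.Ioc a b ↔ v ∈ Set.Ioc a b := by
  refine h.iff_of_adj_iff fun x y hxy => ?_
  simp only [Set.mem_Ioc]
  rcases ((SimpleGraph.fromRel_adj _ _ _).1 hxy).2 with ⟨hx, rfl⟩ | ⟨hy, rfl⟩
  · have := Fin.val_add_one_cases x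
    have := ne_of_mem_of_not_mem hx ha
    have := ne_of_mem_of_not_mem hx hb
    omega
  · have := Fin.val_add_one_cases y
    have := ne_of_mem_of_not_mem hy ha
    have := ne_of_mem_of_not_mem hy hb
    omega

theorem exists_not_reachable_cycleSubgraph {t x y : Fin n} (hxy : x < y) (hx : x ∉ E')
    (hy : y ∉ E') (ht : y < t ∨ t ≤ x) :
    ∃ v, ¬ (cycleSubgraph n E').Reachable v 0 ∧ ¬ (cycleSubgraph n E').Reachable v t := by
  have hmem : y ∈ Set.Ioc x y := ⟨hxy, le_rfl⟩
  refine ⟨y, fun h => ?_, fun h => ?_⟩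
  · exact Fin.not_lt_zero x ((cycleSubgraph_mem_Ioc_iff_of_reachable hx hy h).1 hmem).1
  · have := (cycleSubgraph_mem_Ioc_iff_of_reachable hx hy h).1 hmem
    simp only [Set.mem_Ioc] at this
    omega

theorem eq_compl_pair_of_cycleSubgraph (hn : 2 ≤ n) {t : Fin n}
    (hst : ¬ (cycleSubgraph n E').Reachable 0 t)
    (hall : ∀ v, (cycleSubgraph n E').Reachable v 0 ∨ (cycleSubgraph n E').Reachable v t) :
    ∃ a b, a < t ∧ t ≤ b ∧ E' = {a, b}ᶜ := by
  obtain ⟨a, hat, ha⟩ : ∃ a < t, a ∉ E' := by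
    by_contra! hE
    refine hst ?_
    simpa using reachable_cycleSubgraph hn (Nat.zero_le t.val) fun m _ hm =>
      hE _ (by have := Fin.val_cast_of_lt (n := n) (hm.trans t.isLt); omega)
  obtain ⟨b, htb, hb⟩ : ∃ b, t ≤ b ∧ b ∉ E' := by
    by_contra! hE
    refine hst (SimpleGraph.Reachable.symm ?_)
    simpa [Fin.natCast_self] using reachable_cycleSubgraph hn t.isLt.le fun m hm hmn =>
      hE _ (by have := Fin.val_cast_of_lt hmn; omega)
  refine ⟨a, b, hat, htb, Finset.ext fun c => ?_⟩
  simp only [Finset.mem_compl, Finset.mem_insert, Finset.mem_singleton, not_or]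
  refine ⟨fun hc => ⟨ne_of_mem_of_not_mem hc ha, ne_of_mem_of_not_mem hc hb⟩,
    fun ⟨hca, hcb⟩ => by_contra fun hc => ?_⟩
  obtain ⟨v, hv0, hvt⟩ : ∃ v, ¬ (cycleSubgraph n E').Reachable v 0 ∧
      ¬ (cycleSubgraph n E').Reachable v t := by
    obtain h | h | h | h : c < a ∨ (a < c ∧ c < t) ∨ (t ≤ c ∧ c < b) ∨ b < c := by omega
    exacts [exists_not_reachable_cycleSubgraph h hc ha (Or.inl hat),
      exists_not_reachable_cycleSubgraph h.1 ha hc (Or.inl h.2),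
      exists_not_reachable_cycleSubgraph h.2 hc hb (Or.inr h.1),
      exists_not_reachable_cycleSubgraph h hb hc (Or.inr htb)]
  exact (hall v).elim hv0 hvt

theorem cycleSubgraph_compl_pair (hn : 2 ≤ n) {a b t : Fin n} (hat : a < t) (htb : t ≤ b) :
    ¬ (cycleSubgraph n {a, b}ᶜ).Reachable 0 t ∧
      ∀ v, (cycleSubgraph n {a, b}ᶜ).Reachable v 0 ∨ (cycleSubgraph n {a, b}ᶜ).Reachable v t := by
  have ha : a ∉ ({a, b}ᶜ : Finset (Fin n)) := by simp
  have hb : b ∉ ({a, b}ᶜ : Finset (Fin n)) := by simp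
  have hmem : ∀ m < n, m ≠ a.val → m ≠ b.val → (m : Fin n) ∈ ({a, b}ᶜ : Finset (Fin n)) := by
    intro m hm hma hmb
    simp only [Finset.mem_compl, Finset.mem_insert, Finset.mem_singleton, not_or, Fin.ext_iff,
      Fin.val_cast_of_lt hm]
    exact ⟨hma, hmb⟩
  refine ⟨fun h => Fin.not_lt_zero a
    ((cycleSubgraph_mem_Ioc_iff_of_reachable ha hb h).2 ⟨hat, htb⟩).1, fun v => ?_⟩
  obtain hv | hv | hv | hv : v ≤ a ∨ (a < v ∧ v ≤ t) ∨ (t < v ∧ v ≤ b) ∨ b < v := by omega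
  · left
    simpa using (reachable_cycleSubgraph hn (Nat.zero_le v.val) fun m _ hm =>
      hmem m (by omega) (by omega) (by omega)).symm
  · right
    simpa using reachable_cycleSubgraph hn (Fin.le_iff_val_le_val.1 hv.2) fun m hm hmt =>
      hmem m (by omega) (by omega) (by omega)
  · right
    simpa using (reachable_cycleSubgraph hn (Fin.le_iff_val_le_val.1 hv.1.le) fun m hm hmv =>
      hmem m (by omega) (by omega) (by omega)).symm
  · left
    simpa [Fin.natCast_self] using reachable_cycleSubgraph hn v.isLt.le fun m hm hmn =>
      hmem m hmn (by omega) (by omega)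

theorem dist_cycleSubgraph_univ_zero (hn : 2 ≤ n) (t : Fin n) :
    (cycleSubgraph n Finset.univ).dist 0 t = min t.val (n - t.val) := by
  obtain ⟨w₁, hw₁⟩ := exists_walk_cycleSubgraph hn (Nat.zero_le t.val) fun _ _ _ =>
    Finset.mem_univ _
  obtain ⟨w₂, hw₂⟩ := exists_walk_cycleSubgraph hn t.isLt.le fun _ _ _ => Finset.mem_univ _
  have hle₁ := SimpleGraph.dist_le (w₁.copy Nat.cast_zero (Fin.cast_val_eq_self t))
  have hle₂ := SimpleGraph.dist_le (w₂.copy (Fin.cast_val_eq_self t) (Fin.natCast_self n))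
  rw [SimpleGraph.Walk.length_copy, hw₁] at hle₁
  rw [SimpleGraph.Walk.length_copy, hw₂, SimpleGraph.dist_comm] at hle₂
  obtain ⟨w, hw⟩ :=
    (w₁.copy Nat.cast_zero (Fin.cast_val_eq_self t)).reachable.exists_walk_length_eq_dist
  have hlip := w.le_add_length (f := fun x : Fin n => min x.val (n - x.val)) fun x y hxy => by
    rcases ((SimpleGraph.fromRel_adj _ _ _).1 hxy).2 with ⟨-, rfl⟩ | ⟨-, rfl⟩
    · have := Fin.val_add_one_cases x
      omega
    · have := Fin.val_add_one_cases y
      omega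
  simp only [Fin.val_zero, Nat.sub_zero, hw] at hlip
  omega

end CycleSubgraph

namespace Multigraph

variable {n : ℕ} {h2 : 2 ≤ n} [NeZero n]

-- `(cycleGraph n h2).V` is `Fin n` only after unfolding `cycleGraph`, which `rw` and `simp` do
-- not do; so facts about `cycleGraph` are moved to `cycleSubgraph` by `change` and `congrArg`.
theorem subgraph_cycleGraph (E' : Finset (Fin n)) :
    (cycleGraph n h2).subgraph E' = cycleSubgraph n E' := by
  refine SimpleGraph.ext (funext fun (u : Fin n) => funext fun (v : Fin n) => propext ?_)
  change (u ≠ v ∧ ∃ e : Fin n, e ∈ E' ∧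
      s(e, ⟨(e.val + 1) % n, Nat.mod_lt _ (NeZero.pos n)⟩) = s(u, v)) ↔
    u ≠ v ∧ ((u ∈ E' ∧ v = u + 1) ∨ (v ∈ E' ∧ u = v + 1))
  simp only [Fin.mk_val_add_one_mod, Sym2.eq_iff]
  aesop

theorem isoTerm_cycleGraph_sub (s t : Fin n) :
    IsoTerm (cycleGraph n h2) (cycleGraph n h2) s t (0 : Fin n) (t - s) := by
  refine ⟨(Equiv.subRight s : Fin n ≃ Fin n), (Equiv.subRight s : Fin n ≃ Fin n),
    fun (e : Fin n) => ?_, sub_self s, rfl⟩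
  change s(e - s, ⟨((e - s).val + 1) % n, Nat.mod_lt _ (NeZero.pos n)⟩) =
    Sym2.map (· - s) s(e, ⟨(e.val + 1) % n, Nat.mod_lt _ (NeZero.pos n)⟩)
  rw [Fin.mk_val_add_one_mod, Fin.mk_val_add_one_mod, Sym2.map_mk, sub_add_eq_add_sub]

theorem splitState_cycleGraph_iff {s t : Fin n} {E' : Finset (Fin n)} :
    (cycleGraph n h2).SplitState s t E' ↔ ¬ (cycleSubgraph n E').Reachable s t ∧
      ∀ v, (cycleSubgraph n E').Reachable v s ∨ (cycleSubgraph n E').Reachable v t :=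
  Iff.of_eq (congrArg (fun G : SimpleGraph (Fin n) =>
    ¬ G.Reachable s t ∧ ∀ v, G.Reachable v s ∨ G.Reachable v t) (subgraph_cycleGraph E'))

theorem splitState_cycleGraph_zero_iff {t : Fin n} {E' : Finset (Fin n)} :
    (cycleGraph n h2).SplitState (0 : Fin n) t E' ↔ ∃ a b, a < t ∧ t ≤ b ∧ E' = {a, b}ᶜ :=
  splitState_cycleGraph_iff.trans ⟨fun h => eq_compl_pair_of_cycleSubgraph h2 h.1 h.2,
    fun ⟨_, _, hat, htb, hE'⟩ => hE' ▸ cycleSubgraph_compl_pair h2 hat htb⟩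

theorem sRel_cycleGraph_zero (t : Fin n) (p : ℝ) :
    (cycleGraph n h2).sRel (0 : Fin n) t p =
      ((t.val * (n - t.val) : ℕ) : ℝ) * p ^ (n - 2) * (1 - p) ^ 2 := by
  set S := (Finset.Iio t ×ˢ Finset.Ici t).image
    fun ab : Fin n × Fin n => ({ab.1, ab.2}ᶜ : Finset (Fin n))
  have hS (E' : Finset (Fin n)) : (cycleGraph n h2).SplitState (0 : Fin n) t E' ↔ E' ∈ S := by
    refine splitState_cycleGraph_zero_iff.trans ?_
    simp only [S, Finset.mem_image, Finset.mem_product, Finset.mem_Iio, Finset.mem_Ici,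
      Prod.exists, and_assoc, eq_comm]
  have hinj : Set.InjOn (fun ab : Fin n × Fin n => ({ab.1, ab.2}ᶜ : Finset (Fin n)))
      ↑(Finset.Iio t ×ˢ Finset.Ici t) := by
    rw [Finset.coe_product, Finset.coe_Iio, Finset.coe_Ici]
    exact compl_injective.comp_injOn (Finset.injOn_pair_Iio_prod_Ici t)
  have hterm : ∀ ab ∈ Finset.Iio t ×ˢ Finset.Ici t,
      p ^ ({ab.1, ab.2}ᶜ : Finset (Fin n)).card *
        (1 - p) ^ (Fintype.card (Fin n) - ({ab.1, ab.2}ᶜ : Finset (Fin n)).card) =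
      p ^ (n - 2) * (1 - p) ^ 2 := by
    rintro ⟨a, b⟩ hab
    simp only [Finset.mem_product, Finset.mem_Iio, Finset.mem_Ici] at hab
    rw [Finset.card_compl, Finset.card_pair (hab.1.trans_le hab.2).ne, Fintype.card_fin]
    congr 2
    omega
  calc (cycleGraph n h2).sRel (0 : Fin n) t p
      = ∑ E' : Finset (Fin n), if E' ∈ S then
          p ^ E'.card * (1 - p) ^ (Fintype.card (Fin n) - E'.card) else 0 :=
        Finset.sum_congr rfl fun E' _ => by congr 1; exact propext (hS E')
    _ = _ := by
      rw [Finset.sum_ite_mem, Finset.univ_inter, Finset.sum_image hinj, Finset.sum_congr rfl hterm,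
        Finset.sum_const, Finset.card_product, Fin.card_Iio, Fin.card_Ici, nsmul_eq_mul]
      push_cast
      ring

theorem dist_cycleGraph_zero (t : Fin n) :
    ((cycleGraph n h2).subgraph Finset.univ).dist (0 : Fin n) t = min t.val (n - t.val) :=
  (congrArg (fun G : SimpleGraph (Fin n) => G.dist 0 t) (subgraph_cycleGraph Finset.univ)).trans
    (dist_cycleSubgraph_univ_zero h2 t)

end Multigraph

/-- If `s ≠ t` are vertices of the cycle `C_n` (`n ≥ 3`) at distance `k`,
then `sRel(C_n,s,t;p) = k(n-k)·p^{n-2}·(1-p)²` for all `p ∈ [0,1]`. -/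
theorem sRel_cycle (n k : ℕ) (hn : 3 ≤ n) (s t : Fin n)
    (hk : ((Multigraph.cycleGraph n (by omega)).subgraph Finset.univ).dist s t = k) :
    ∀ p : ℝ, 0 ≤ p → p ≤ 1 →
      (Multigraph.cycleGraph n (by omega)).sRel s t p =
        ((k * (n - k) : ℕ) : ℝ) * p ^ (n - 2) * (1 - p) ^ 2 := by
  intro p _ _
  have : NeZero n := ⟨by omega⟩
  have hrot := Multigraph.isoTerm_cycleGraph_sub (h2 := by omega) s t
  have hdist : min (t - s).val (n - (t - s).val) = k :=
    (Multigraph.dist_cycleGraph_zero _).symm.trans (hrot.dist_eq.trans hk)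
  refine (hrot.sRel_eq p).trans ((Multigraph.sRel_cycleGraph_zero _ p).trans ?_)
  rw [← hdist, Nat.min_mul_sub_min (t - s).isLt.le]
end

section
/- Let G be a connected finite loopless multigraph with distinct vertices s and u, and let G' be the graph obtained from G by adjoining a new vertex t joined by a single new edge to u. Then for all p ∈ [0,1], sRel(G',s,t;p) = (1-p)·Rel(G;p) + p·sRel(G,s,u;p). -/
/-! Sort the edge sets of `G'` by whether they contain the pendant edge `ut`. Without it `t` is
isolated, so the state is split exactly when the remaining edges connect all of `G`: these sets
contribute `(1 - p) · Rel(G)`. With it `t` joins the component of `u`, so the state is split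
exactly when the remaining edges split `G` into the components of `s` and `u`: these contribute
`p · sRel(G, s, u)`. -/

namespace Finset

def optionEquiv (α : Type*) [DecidableEq α] : Finset (Option α) ≃ Bool × Finset α where
  toFun F := (decide (none ∈ F), F.eraseNone)
  invFun x := if x.1 then x.2.insertNone else x.2.map Function.Embedding.some
  left_inv F := by
    by_cases h : none ∈ F
    · simp [h, insertNone_eraseNone, insert_eq_self.mpr h]
    · simp [h, map_some_eraseNone]
  right_inv := by
    rintro ⟨_ | _, s⟩ <;> simp

theorem sum_univ_finset_option {α M : Type*} [DecidableEq α] [Fintype α] [AddCommMonoid M]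
    (f : Finset (Option α) → M) :
    ∑ F, f F = ∑ s : Finset α, (f s.insertNone + f (s.map Function.Embedding.some)) := by
  rw [← (optionEquiv α).symm.sum_comp, Fintype.sum_prod_type]
  simp [optionEquiv, sum_add_distrib, add_comm]

end Finset

open Finset

namespace Multigraph

variable {G : Multigraph} {u : G.V} {F : Finset (Option G.E)} {E' : Finset G.E}

lemma addPendant_subgraph_adj_some_some (hF : ∀ e, some e ∈ F ↔ e ∈ E') {a b : G.V} :
    ((G.addPendant u).subgraph F).Adj (some a) (some b) ↔ (G.subgraph E').Adj a b := by
  constructor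
  · rintro ⟨hne, e | e, he, hends⟩
    · simp [addPendant] at hends
    · refine ⟨fun h => hne (congrArg some h), e, (hF e).mp he, ?_⟩
      exact Sym2.map.injective (Option.some_injective G.V) hends
  · rintro ⟨hne, e, he, hends⟩
    exact ⟨(Option.some_injective _).ne hne, some e, (hF e).mpr he,
      by simp [addPendant, hends]⟩

lemma addPendant_subgraph_adj_none {x : Option G.V} :
    ((G.addPendant u).subgraph F).Adj x none ↔ none ∈ F ∧ x = some u := by
  constructor
  · rintro ⟨-, e | e, he, hends⟩
    · exact ⟨he, by simpa [addPendant, eq_comm] using hends⟩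
    · have : none ∈ (G.addPendant u).ends (some e) := hends ▸ Sym2.mem_mk_right x none
      obtain ⟨a, -, ha⟩ := Sym2.mem_map.mp this
      exact absurd ha (Option.some_ne_none a)
  · rintro ⟨hmem, rfl⟩
    exact ⟨Option.some_ne_none u, none, hmem, rfl⟩

lemma addPendant_reachable_getD (hF : ∀ e, some e ∈ F ↔ e ∈ E') {x y : Option G.V}
    (h : ((G.addPendant u).subgraph F).Reachable x y) :
    (G.subgraph E').Reachable (x.getD u) (y.getD u) := by
  have step : ∀ x y : Option G.V, ((G.addPendant u).subgraph F).Adj x y →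
      (G.subgraph E').Reachable (x.getD u) (y.getD u) := by
    rintro (_ | a) (_ | b) hxy
    · exact absurd rfl hxy.ne
    · obtain ⟨-, ⟨⟩⟩ := addPendant_subgraph_adj_none.mp hxy.symm
      rfl
    · obtain ⟨-, ⟨⟩⟩ := addPendant_subgraph_adj_none.mp hxy
      rfl
    · exact ((addPendant_subgraph_adj_some_some hF).mp hxy).reachable
  refine (SimpleGraph.reachable_iff_reflTransGen _ _).mpr ?_
  exact ((SimpleGraph.reachable_iff_reflTransGen _ _).mp h).lift' _
    fun x y hxy => (SimpleGraph.reachable_iff_reflTransGen _ _).mp (step x y hxy)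

lemma addPendant_reachable_some_some (hF : ∀ e, some e ∈ F ↔ e ∈ E') {a b : G.V} :
    ((G.addPendant u).subgraph F).Reachable (some a) (some b) ↔ (G.subgraph E').Reachable a b :=
  ⟨addPendant_reachable_getD hF,
    fun h => h.map ⟨some, (addPendant_subgraph_adj_some_some hF).mpr⟩⟩

lemma addPendant_reachable_some_none (hF : ∀ e, some e ∈ F ↔ e ∈ E') (hnone : none ∈ F)
    {a : G.V} :
    ((G.addPendant u).subgraph F).Reachable (some a) none ↔ (G.subgraph E').Reachable a u :=
  ⟨addPendant_reachable_getD hF, fun h => ((addPendant_reachable_some_some hF).mpr h).trans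
    (addPendant_subgraph_adj_none.mpr ⟨hnone, rfl⟩).reachable⟩

lemma addPendant_not_reachable_some_none (hnone : none ∉ F) {a : G.V} :
    ¬ ((G.addPendant u).subgraph F).Reachable (some a) none := by
  intro h
  obtain ⟨w⟩ := h.symm
  cases w with
  | cons hadj _ => exact hnone (addPendant_subgraph_adj_none.mp hadj.symm).1

variable {s : G.V}

lemma splitState_addPendant_map_some :
    (G.addPendant u).SplitState (some s) none (E'.map .some : Finset (Option G.E)) ↔
      (G.subgraph E').Connected := by
  have hF (e : G.E) : some e ∈ E'.map Function.Embedding.some ↔ e ∈ E' := by simp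
  have hnone : none ∉ E'.map Function.Embedding.some := by simp
  constructor
  · rintro ⟨-, h⟩
    refine (SimpleGraph.connected_iff_exists_forall_reachable _).mpr ⟨s, fun v => ?_⟩
    exact ((addPendant_reachable_some_some hF).mp
      ((h (some v)).resolve_right (addPendant_not_reachable_some_none hnone))).symm
  · refine fun h => ⟨addPendant_not_reachable_some_none hnone, ?_⟩
    rintro (_ | v)
    · exact Or.inr .rfl
    · exact Or.inl ((addPendant_reachable_some_some hF).mpr (h.preconnected v s))

lemma splitState_addPendant_insertNone :
    (G.addPendant u).SplitState (some s) none E'.insertNone ↔ G.SplitState s u E' := by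
  have hF (e : G.E) : some e ∈ E'.insertNone ↔ e ∈ E' := some_mem_insertNone
  have hreach_none (a : G.V) := addPendant_reachable_some_none (u := u) hF
    none_mem_insertNone (a := a)
  constructor
  · rintro ⟨hst, h⟩
    exact ⟨fun hsu => hst ((hreach_none s).mpr hsu),
      fun v => (h (some v)).imp (addPendant_reachable_some_some hF).mp (hreach_none v).mp⟩
  · rintro ⟨hsu, h⟩
    refine ⟨fun hst => hsu ((hreach_none s).mp hst), ?_⟩
    rintro (_ | v)
    · exact Or.inr .rfl
    · exact (h v).imp (addPendant_reachable_some_some hF).mpr (hreach_none v).mpr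

end Multigraph

theorem sRel_addPendant_general (G : Multigraph) (s u : G.V) :
    ∀ p : ℝ, 0 ≤ p → p ≤ 1 →
      (G.addPendant u).sRel (some s) none p = (1 - p) * G.Rel p + p * G.sRel s u p := by
  intro p _ _
  classical
  -- restated over `Option G.E` rather than `(G.addPendant u).E`, so that the lemmas above match
  have hsRel : (G.addPendant u).sRel (some s) none p =
      ∑ F : Finset (Option G.E), if (G.addPendant u).SplitState (some s) none F then
        p ^ #F * (1 - p) ^ (Fintype.card (Option G.E) - #F) else 0 := rfl
  rw [hsRel, sum_univ_finset_option, Fintype.card_option, Multigraph.Rel, Multigraph.sRel,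
    mul_sum, mul_sum, ← sum_add_distrib]
  refine sum_congr rfl fun E' _ => ?_
  have hle : #E' ≤ Fintype.card G.E := E'.card_le_univ
  simp only [Multigraph.splitState_addPendant_insertNone, Multigraph.splitState_addPendant_map_some,
    card_insertNone, card_map, Nat.add_sub_add_right, Nat.sub_add_comm hle, pow_succ]
  split_ifs <;> ring

/-- If `G'` is obtained from a connected multigraph `G` by adjoining a new
vertex `t` joined by a single new edge to `u`, then
`sRel(G',s,t;p) = (1-p)·Rel(G;p) + p·sRel(G,s,u;p)` for all `p ∈ [0,1]`. -/
theorem sRel_addPendant (G : Multigraph) (s u : G.V) (hG : G.Connected) (hsu : s ≠ u) :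
    ∀ p : ℝ, 0 ≤ p → p ≤ 1 →
      (G.addPendant u).sRel (some s) none p = (1 - p) * G.Rel p + p * G.sRel s u p :=
  sRel_addPendant_general G s u
end

section
/- For m ≥ n ≥ 3 and for any placement of the bundle, the graph G_{n,m} with terminals s and t satisfies, for all p ∈ [0,1], sRel(G_{n,m},s,t;p) = (n-2)(1-p)p^{n-3}(1-(1-p)^{m-n+2}) + (1-p)^{m-n+2} p^{n-2}; in particular, the split reliability of G_{n,m} does not depend on which edge of the path carries the bundle. -/
/-!
Every edge of `G_{n,m}` joins `v_j` and `v_{j+1}` for its position `j`; each of the `n - 1`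
positions carries a single edge except the bundle position, which carries `m - n + 2`. A spanning
subgraph separates `s` from `t` into two components exactly when precisely one position carries
none of its edges. The fibres of the position map are disjoint, so the events "position `j` is
empty" are independent, of probability `(1-p)^{c_j}`; hence the split reliability equals
`∑_l (1-p)^{c_l} ∏_{j ≠ l} (1 - (1-p)^{c_j})`, which evaluates to the stated formula.
-/

open Finset

theorem ite_exists_eq_sum_ite {ι M : Type*} [Fintype ι] [AddCommMonoid M] {P : ι → Prop}
    [DecidablePred P] [Decidable (∃ i, P i)] (hP : ∀ i j, P i → P j → i = j) (c : M) :
    (if ∃ i, P i then c else 0) = ∑ i, if P i then c else 0 := by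
  split_ifs with h
  · obtain ⟨i, hi⟩ := h
    rw [Fintype.sum_eq_single i fun j hj => if_neg fun hj' => hj (hP _ _ hj' hi), if_pos hi]
  · exact (sum_eq_zero fun i _ => if_neg fun hi => h ⟨i, hi⟩).symm

section SubsetSums

variable {α β R : Type*} [DecidableEq α] [CommRing R]

theorem sum_prod_filter_eq_prod_sum_powerset [Fintype α] [Fintype β] [DecidableEq β]
    (f : α → β) (h : β → Finset α → R) :
    ∑ s : Finset α, ∏ b, h b {a ∈ s | f a = b} =
      ∏ b, ∑ t ∈ ({a | f a = b} : Finset α).powerset, h b t := by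
  rw [prod_univ_sum]
  refine sum_nbij' (fun s b => {a ∈ s | f a = b}) (fun x => ({a | a ∈ x (f a)} : Finset α))
    ?_ ?_ ?_ ?_ ?_
  · intro s _
    simp only [Fintype.mem_piFinset, mem_powerset]
    exact fun b => filter_subset_filter _ (subset_univ s)
  · simp
  · intro s _
    ext a
    simp
  · intro x hx
    have hfx : ∀ b, ∀ a ∈ x b, f a = b := fun b a ha => by
      simpa using (mem_powerset.1 (Fintype.mem_piFinset.1 hx b)) ha
    funext b
    ext a
    simp only [mem_filter, mem_univ, true_and]
    exact ⟨fun ⟨ha, hab⟩ => hab ▸ ha, fun ha => ⟨(hfx b a ha).symm ▸ ha, hfx b a ha⟩⟩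
  · intro s _
    rfl

theorem prod_ite_mem_eq_pow_mul_pow {s t : Finset α} (hts : t ⊆ s) (x y : R) :
    ∏ a ∈ s, (if a ∈ t then x else y) = x ^ #t * y ^ (#s - #t) := by
  rw [prod_ite, prod_const, prod_const, filter_mem_eq_inter, inter_eq_right.2 hts,
    filter_not, filter_mem_eq_inter, inter_eq_right.2 hts, card_sdiff_of_subset hts]

theorem sum_powerset_ite_nonempty (s : Finset α) (p : R) :
    ∑ t ∈ s.powerset, (if t.Nonempty then p ^ #t * (1 - p) ^ (#s - #t) else 0) =
      1 - (1 - p) ^ #s := by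
  have hsplit : ∀ t : Finset α, (if t.Nonempty then p ^ #t * (1 - p) ^ (#s - #t) else 0) =
      p ^ #t * (1 - p) ^ (#s - #t) - if ∅ = t then p ^ #t * (1 - p) ^ (#s - #t) else 0 := by
    intro t
    rcases t.eq_empty_or_nonempty with rfl | ht
    · simp
    · simp [ht, ht.ne_empty.symm]
  rw [sum_congr rfl fun t _ => hsplit t, sum_sub_distrib, sum_pow_mul_eq_add_pow,
    sum_ite_eq _ _ _, if_pos (empty_mem_powerset s)]
  simp

theorem sum_ite_image_eq [Fintype α] [Fintype β] [DecidableEq β] (f : α → β) (S : Finset β)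
    (p : R) :
    ∑ s : Finset α, (if s.image f = S then p ^ #s * (1 - p) ^ (Fintype.card α - #s) else 0) =
      ∏ b, if b ∈ S then 1 - (1 - p) ^ #{a | f a = b} else (1 - p) ^ #{a | f a = b} := by
  set F : β → Finset α := fun b => {a | f a = b}
  set h : β → Finset α → R := fun b t =>
    if (t.Nonempty ↔ b ∈ S) then p ^ #t * (1 - p) ^ (#(F b) - #t) else 0
  -- both the weight of `s` and the condition `s.image f = S` factor over the fibres of `f`
  have hterm : ∀ s : Finset α,
      (if s.image f = S then p ^ #s * (1 - p) ^ (Fintype.card α - #s) else 0) =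
        ∏ b, h b {a ∈ s | f a = b} := by
    intro s
    have hcond : s.image f = S ↔ ∀ b, ({a ∈ s | f a = b}.Nonempty ↔ b ∈ S) := by
      simp [Finset.ext_iff, Finset.Nonempty]
    have hweight : p ^ #s * (1 - p) ^ (Fintype.card α - #s) =
        ∏ b, p ^ #{a ∈ s | f a = b} * (1 - p) ^ (#(F b) - #{a ∈ s | f a = b}) := by
      rw [← card_univ, ← prod_ite_mem_eq_pow_mul_pow (subset_univ s), ← prod_fiberwise univ f]
      refine prod_congr rfl fun b _ => ?_
      rw [← prod_ite_mem_eq_pow_mul_pow (filter_subset_filter _ (subset_univ s))]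
      refine prod_congr rfl fun a ha => ?_
      simp_all
    rw [Fintype.prod_ite_zero, ← hweight]
    exact if_congr hcond rfl rfl
  have hfiber : ∀ b, ∑ t ∈ (F b).powerset, h b t =
      if b ∈ S then 1 - (1 - p) ^ #(F b) else (1 - p) ^ #(F b) := by
    intro b
    by_cases hb : b ∈ S
    · simp only [h, hb, iff_true, if_true]
      exact sum_powerset_ite_nonempty _ p
    · simp only [h, hb, iff_false, not_nonempty_iff_eq_empty, if_false]
      rw [sum_ite_eq' _ _ _, if_pos (empty_mem_powerset _)]
      simp
  rw [sum_congr rfl fun s _ => hterm s, sum_prod_filter_eq_prod_sum_powerset]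
  exact prod_congr rfl fun b _ => hfiber b

theorem sum_ite_card_compl_image_eq_one [Fintype α] [Fintype β] [DecidableEq β] (f : α → β)
    (p : R) :
    ∑ s : Finset α, (if #(s.image f)ᶜ = 1 then p ^ #s * (1 - p) ^ (Fintype.card α - #s) else 0) =
      ∑ l, (1 - p) ^ #{a | f a = l} * ∏ b ∈ univ.erase l, (1 - (1 - p) ^ #{a | f a = b}) := by
  have hsingle : ∀ s : Finset α, #(s.image f)ᶜ = 1 ↔ ∃ l, s.image f = {l}ᶜ := fun s => by
    rw [card_eq_one]
    exact exists_congr fun l => compl_eq_comm.trans eq_comm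
  rw [sum_congr rfl fun s _ => (if_congr (hsingle s) rfl rfl).trans
    (ite_exists_eq_sum_ite (fun i j hi hj =>
      singleton_injective (compl_injective (hi.symm.trans hj))) _), sum_comm]
  refine sum_congr rfl fun l _ => ?_
  rw [sum_ite_image_eq, ← mul_prod_erase univ _ (mem_univ l), if_neg (by simp)]
  congr 1
  exact prod_congr rfl fun b hb => if_pos (by simpa using hb)

end SubsetSums

theorem sum_pow_mul_prod_erase_of_forall_ne_eq_one {ι R : Type*} [Fintype ι] [DecidableEq ι]
    [CommRing R] (c : ι → ℕ) (k : ι) (hc : ∀ b ≠ k, c b = 1) (q : R) :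
    ∑ l, q ^ c l * ∏ b ∈ univ.erase l, (1 - q ^ c b) =
      q ^ c k * (1 - q) ^ (Fintype.card ι - 1) +
        (Fintype.card ι - 1 : ℕ) * q * (1 - q ^ c k) * (1 - q) ^ (Fintype.card ι - 2) := by
  have hcard : #(univ.erase k) = Fintype.card ι - 1 := by
    rw [card_erase_of_mem (mem_univ k), card_univ]
  have hk : ∏ b ∈ univ.erase k, (1 - q ^ c b) = (1 - q) ^ (Fintype.card ι - 1) := by
    rw [prod_congr rfl fun b hb => by rw [hc b (ne_of_mem_erase hb), pow_one], prod_const, hcard]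
  have hl : ∀ l ∈ univ.erase k, q ^ c l * ∏ b ∈ univ.erase l, (1 - q ^ c b) =
      q * (1 - q ^ c k) * (1 - q) ^ (Fintype.card ι - 2) := by
    intro l hl
    have hlk := ne_of_mem_erase hl
    have hkl : k ∈ univ.erase l := mem_erase.2 ⟨hlk.symm, mem_univ k⟩
    rw [hc l hlk, pow_one, ← mul_prod_erase _ _ hkl,
      prod_congr rfl fun b hb => by rw [hc b (ne_of_mem_erase hb), pow_one], prod_const,
      card_erase_of_mem hkl, card_erase_of_mem (mem_univ l), card_univ, mul_assoc, Nat.sub_sub]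
  rw [← add_sum_erase univ _ (mem_univ k), hk, sum_congr rfl hl, sum_const, hcard, nsmul_eq_mul]
  ring

namespace SimpleGraph

variable {N : ℕ}

def partialPath (O : Finset (Fin N)) : SimpleGraph (Fin (N + 1)) :=
  fromEdgeSet ((fun j : Fin N => s(j.castSucc, j.succ)) '' O)

variable {O : Finset (Fin N)}

theorem partialPath_adj {u v : Fin (N + 1)} :
    (partialPath O).Adj u v ↔ ∃ j ∈ O, s(j.castSucc, j.succ) = s(u, v) := by
  rw [partialPath, fromEdgeSet_adj]
  simp only [Set.mem_image, mem_coe]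
  refine ⟨And.left, fun ⟨j, hj, he⟩ => ⟨⟨j, hj, he⟩, ?_⟩⟩
  rintro rfl
  simp only [Sym2.eq_iff, or_self, Fin.ext_iff, Fin.val_castSucc, Fin.val_succ] at he
  omega

theorem partialPath_reachable_of_forall_mem {i j : Fin (N + 1)} (hij : i ≤ j)
    (hO : ∀ x : Fin N, i ≤ x.castSucc → x.succ ≤ j → x ∈ O) : (partialPath O).Reachable i j := by
  induction j using Fin.induction with
  | zero => rw [Fin.le_zero_iff.1 hij]
  | succ x ih =>
    rcases hij.eq_or_lt with rfl | hlt
    · rfl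
    · have hix : i ≤ x.castSucc := Fin.le_castSucc_iff.2 hlt
      refine (ih hix fun y hy hyx => hO y hy (hyx.trans Fin.castSucc_lt_succ.le)).trans ?_
      exact (partialPath_adj.2 ⟨x, hO x hix le_rfl, rfl⟩).reachable

theorem partialPath_le_iff_of_reachable {x : Fin N} (hx : x ∉ O) {u v : Fin (N + 1)}
    (huv : (partialPath O).Reachable u v) : u ≤ x.castSucc ↔ v ≤ x.castSucc := by
  obtain ⟨w⟩ := huv
  induction w with
  | nil => rfl
  | cons hadj _ ih =>
    refine Iff.trans ?_ ih
    obtain ⟨j, hj, hends⟩ := partialPath_adj.1 hadj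
    have hjx : j ≠ x := fun h => hx (h ▸ hj)
    rw [Sym2.eq_iff] at hends
    rw [Ne, Fin.ext_iff] at hjx
    rcases hends with ⟨rfl, rfl⟩ | ⟨rfl, rfl⟩ <;>
      simp only [Fin.le_def, Fin.val_castSucc, Fin.val_succ] <;> omega

theorem partialPath_split_iff :
    (¬ (partialPath O).Reachable 0 (Fin.last N) ∧
      ∀ v, (partialPath O).Reachable v 0 ∨ (partialPath O).Reachable v (Fin.last N)) ↔
      #Oᶜ = 1 := by
  have hsingle : #Oᶜ = 1 ↔ ∃ l, O = {l}ᶜ := by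
    rw [card_eq_one]
    exact exists_congr fun l => compl_eq_comm.trans eq_comm
  rw [hsingle]
  constructor
  · rintro ⟨hst, hsplit⟩
    have two_gaps : ∀ a b : Fin N, a < b → a ∉ O → b ∉ O → False := by
      intro a b hab ha hb
      rcases hsplit a.succ with h | h
      · have := partialPath_le_iff_of_reachable ha h
        simp only [Fin.le_def, Fin.val_castSucc, Fin.val_succ, Fin.val_zero] at this
        omega
      · have := partialPath_le_iff_of_reachable hb h
        simp only [Fin.le_def, Fin.lt_def, Fin.val_castSucc, Fin.val_succ, Fin.val_last] at this hab
        omega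
    obtain ⟨l, hl⟩ : ∃ l : Fin N, l ∉ O := by
      by_contra! hall
      exact hst (partialPath_reachable_of_forall_mem (Fin.zero_le _) fun x _ _ => hall x)
    refine ⟨l, ext fun x => ?_⟩
    rw [mem_compl, mem_singleton]
    refine ⟨fun hx h => hl (h ▸ hx), fun hx => ?_⟩
    by_contra hxO
    rcases lt_or_gt_of_ne hx with h | h
    exacts [two_gaps _ _ h hxO hl, two_gaps _ _ h hl hxO]
  · rintro ⟨l, rfl⟩
    have hl : l ∉ ({l}ᶜ : Finset (Fin N)) := by simp
    refine ⟨fun h => ?_, fun v => ?_⟩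
    · have := partialPath_le_iff_of_reachable hl h
      simp only [Fin.le_def, Fin.val_castSucc, Fin.val_last, Fin.val_zero] at this
      omega
    · by_cases hv : v ≤ l.castSucc
      · left
        refine (partialPath_reachable_of_forall_mem (Fin.zero_le v) fun x _ hxv => ?_).symm
        simp only [Fin.le_def, Fin.val_castSucc, Fin.val_succ, mem_compl, mem_singleton,
          Fin.ext_iff] at hv hxv ⊢
        omega
      · right
        refine partialPath_reachable_of_forall_mem (Fin.le_last v) fun x hvx _ => ?_
        simp only [Fin.le_def, Fin.val_castSucc, mem_compl, mem_singleton, Fin.ext_iff] at hv hvx ⊢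
        omega

end SimpleGraph

namespace Multigraph

theorem subgraph_eq_fromEdgeSet (G : Multigraph) (E' : Finset G.E) :
    G.subgraph E' = SimpleGraph.fromEdgeSet (G.ends '' E') := by
  ext u v
  simp only [subgraph, SimpleGraph.fromEdgeSet_adj, Set.mem_image, mem_coe]
  exact and_comm

namespace Gnm

def edgePos {N k : ℕ} (hk : k < N) {m : ℕ} (e : Fin m) : Fin N :=
  if h : e.val < N then ⟨e, h⟩ else ⟨k, hk⟩

variable {N m k : ℕ}

theorem ends_eq (hk : k < N + 1 - 1) (hk' : k < N) (e : Fin m) :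
    (Gnm (N + 1) m k hk).ends e = s((edgePos hk' e).castSucc, (edgePos hk' e).succ) := by
  dsimp only [Gnm, edgePos]
  split_ifs <;> first | omega | rfl

theorem subgraph_eq_partialPath (hk : k < N + 1 - 1) (hk' : k < N)
    (E' : Finset (Gnm (N + 1) m k hk).E) :
    (Gnm (N + 1) m k hk).subgraph E' = SimpleGraph.partialPath (E'.image (edgePos hk')) := by
  rw [subgraph_eq_fromEdgeSet, SimpleGraph.partialPath]
  congr 1
  ext x
  constructor
  · rintro ⟨e, he, rfl⟩
    exact ⟨edgePos hk' e, mem_image_of_mem _ he, (ends_eq hk hk' e).symm⟩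
  · rintro ⟨j, hj, rfl⟩
    obtain ⟨e, he, rfl⟩ := mem_image.1 hj
    exact ⟨e, he, ends_eq hk hk' e⟩

theorem splitState_iff (hk : k < N + 1 - 1) (hk' : k < N) (E' : Finset (Gnm (N + 1) m k hk).E) :
    (Gnm (N + 1) m k hk).SplitState ⟨0, by omega⟩ ⟨N + 1 - 1, by omega⟩ E' ↔
      #(E'.image (edgePos hk'))ᶜ = 1 := by
  have ht : (⟨N + 1 - 1, by omega⟩ : Fin (N + 1)) = Fin.last N := Fin.ext (by simp)
  unfold SplitState
  rw [ht, subgraph_eq_partialPath hk hk']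
  exact SimpleGraph.partialPath_split_iff

theorem card_filter_edgePos_of_ne (hk : k < N) (hNm : N ≤ m) {b : Fin N} (hb : b ≠ ⟨k, hk⟩) :
    #{e : Fin m | edgePos hk e = b} = 1 := by
  rw [card_eq_one]
  refine ⟨⟨b, by omega⟩, ext fun e => ?_⟩
  simp only [mem_filter, mem_univ, true_and, mem_singleton, edgePos, Fin.ext_iff]
  split_ifs with h
  · rfl
  · exact ⟨fun he => absurd (Fin.ext he.symm) hb, fun he => absurd (he ▸ b.isLt) h⟩

theorem card_filter_edgePos_self (hk : k < N) (hNm : N ≤ m) :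
    #{e : Fin m | edgePos hk e = ⟨k, hk⟩} = m - N + 1 := by
  have htotal := card_eq_sum_card_fiberwise (s := univ) (t := univ)
    fun (e : Fin m) _ => mem_univ (edgePos hk e)
  rw [← add_sum_erase univ _ (mem_univ ⟨k, hk⟩),
    sum_congr rfl fun b hb => card_filter_edgePos_of_ne hk hNm (ne_of_mem_erase hb), sum_const,
    card_erase_of_mem (mem_univ _), card_univ, card_univ, Fintype.card_fin, Fintype.card_fin,
    smul_eq_mul, mul_one] at htotal
  omega

end Gnm

end Multigraph

/-- For `m ≥ n ≥ 3` and any placement `k` of the bundle,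
`sRel(G_{n,m},s,t;p) = (n-2)(1-p)p^{n-3}(1-(1-p)^{m-n+2}) + (1-p)^{m-n+2}p^{n-2}`;
in particular the split reliability does not depend on `k`. -/
theorem sRel_Gnm (n m : ℕ) (hm : n ≤ m) (k : ℕ) (hk : k < n - 1) :
    ∀ p : ℝ, 0 ≤ p → p ≤ 1 →
      (Multigraph.Gnm n m k hk).sRel (⟨0, by omega⟩ : Fin n) (⟨n - 1, by omega⟩ : Fin n) p =
        ((n - 2 : ℕ) : ℝ) * (1 - p) * p ^ (n - 3) * (1 - (1 - p) ^ (m - n + 2)) +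
          (1 - p) ^ (m - n + 2) * p ^ (n - 2) := by
  intro p _ _
  obtain ⟨N, rfl⟩ : ∃ N, n = N + 1 := ⟨n - 1, by omega⟩
  have hk' : k < N := by omega
  unfold Multigraph.sRel
  simp only [Multigraph.Gnm.splitState_iff hk hk']
  refine (sum_ite_card_compl_image_eq_one (α := Fin m) (Multigraph.Gnm.edgePos hk') p).trans ?_
  rw [sum_pow_mul_prod_erase_of_forall_ne_eq_one _ ⟨k, hk'⟩
      fun b hb => Multigraph.Gnm.card_filter_edgePos_of_ne hk' (by omega) hb,
    Multigraph.Gnm.card_filter_edgePos_self hk' (by omega), Fintype.card_fin, sub_sub_cancel,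
    show N + 1 - 2 = N - 1 by omega, show N + 1 - 3 = N - 2 by omega,
    show m - (N + 1) + 2 = m - N + 1 by omega]
  ring
end

section
/- Let m ≥ 2 and 1 ≤ a ≤ m-1, and let C be the multigraph on vertices s, t, v consisting of a bundle of a parallel edges between s and t and a bundle of m-a parallel edges between t and v, with terminals s and t. Then for all p ∈ [0,1], sRel(C,s,t;p) = (1-p)^a - (1-p)^m, and for all p ∈ (0,1), sRel(C,s,t;p) < (1-p) + (1-p)^{m-1} - 2(1-p)^m = sRel(G_{3,m},s,t;p). -/
/-!
On three vertices `s, t, w`, a spanning subgraph separates `s` from `t` into exactly two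
components iff no edge joins `s` and `t` and `w` is adjacent to exactly one of them. In `C` this
says: none of the `a` edges `st` and at least one of the `m - a` edges `tv`, so
`sRel = (1-p)^a (1 - (1-p)^(m-a))`. In `G_{3,m}` it says: either only the edge `sv`, or no `sv`
edge and at least one `vt` edge. The inequality then comes from `(1-p)^a ≤ 1-p` and
`(1-p)^m < (1-p)^(m-1)`.
-/

namespace SimpleGraph

variable {V : Type*} {G : SimpleGraph V} {s t w : V}

theorem reachable_iff_of_three (hst : s ≠ t) (hV : ∀ v, v = s ∨ v = t ∨ v = w) :
    G.Reachable s t ↔ G.Adj s t ∨ G.Adj s w ∧ G.Adj w t := by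
  refine ⟨fun h => ?_, ?_⟩
  · by_contra hn
    -- If `t` is not reached in one or two steps, the vertices reachable from `s` stay inside
    -- `{s}`, together with `w` when `s` and `w` are adjacent.
    have hclosed : ∀ y, Relation.ReflTransGen G.Adj s y → y = s ∨ G.Adj s w ∧ y = w := by
      intro y hy
      induction hy with
      | refl => exact .inl rfl
      | @tail b c _ hbc ih => rcases hV c with rfl | rfl | rfl <;> grind [G.loopless]
    rw [reachable_eq_reflTransGen] at h
    grind
  · rintro (h | ⟨h₁, h₂⟩)
    · exact h.reachable
    · exact h₁.reachable.trans h₂.reachable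

theorem splits_iff_of_three (hst : s ≠ t) (hsw : s ≠ w) (htw : t ≠ w)
    (hV : ∀ v, v = s ∨ v = t ∨ v = w) :
    (¬ G.Reachable s t ∧ ∀ v, G.Reachable v s ∨ G.Reachable v t) ↔
      ¬ G.Adj s t ∧ Xor (G.Adj w s) (G.Adj w t) := by
  have hcover : (∀ v, G.Reachable v s ∨ G.Reachable v t) ↔
      G.Reachable w s ∨ G.Reachable w t :=
    ⟨fun h => h w, fun h v => by rcases hV v with rfl | rfl | rfl <;> simp_all⟩
  rw [hcover, reachable_iff_of_three hst hV,
    reachable_iff_of_three hsw.symm (w := t) (fun v => by have := hV v; tauto),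
    reachable_iff_of_three htw.symm (w := s) (fun v => by have := hV v; tauto),
    G.adj_comm t s, G.adj_comm s w, xor_iff_iff_not]
  tauto

end SimpleGraph

namespace Finset

theorem sum_powerset_erase_empty_pow_mul_one_sub_pow {ι R : Type*} [DecidableEq ι]
    [CommRing R] (p : R) (S : Finset ι) {N : ℕ} (hS : #S ≤ N) :
    ∑ E ∈ S.powerset.erase ∅, p ^ #E * (1 - p) ^ (N - #E) = (1 - p) ^ (N - #S) - (1 - p) ^ N := by
  have hsplit : ∀ E ∈ S.powerset,
      p ^ #E * (1 - p) ^ (N - #E) = p ^ #E * (1 - p) ^ (#S - #E) * (1 - p) ^ (N - #S) := by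
    intro E hE
    have := card_le_card (mem_powerset.mp hE)
    rw [mul_assoc, ← pow_add]
    congr 2
    omega
  rw [sum_erase_eq_sub (empty_mem_powerset S), sum_congr rfl hsplit, ← sum_mul,
    sum_pow_mul_eq_add_pow, add_sub_cancel, one_pow, one_mul]
  simp

theorem xor_mem_exists_ne_iff {α : Type*} (a : α) (s : Finset α) :
    Xor (a ∈ s) (∃ b ∈ s, b ≠ a) ↔ s = {a} ∨ s.Nonempty ∧ a ∉ s := by
  by_cases ha : a ∈ s
  · simp [ha, eq_singleton_iff_unique_mem, xor_iff_iff_not]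
  · have hne : (∃ b ∈ s, b ≠ a) ↔ s.Nonempty :=
      ⟨fun ⟨b, hb, _⟩ => ⟨b, hb⟩, fun ⟨b, hb⟩ => ⟨b, hb, fun h => ha (h ▸ hb)⟩⟩
    simp [ha, hne, eq_singleton_iff_unique_mem]

end Finset

theorem Fin.card_filter_le_val (a b : ℕ) :
    (Finset.univ.filter fun e : Fin (a + b) => a ≤ e.val).card = b := by
  have h := Finset.card_filter_add_card_filter_not (s := .univ) fun e : Fin (a + b) => e.val < a
  simp only [not_lt, Fin.card_filter_val_lt, Finset.card_univ, Fintype.card_fin] at h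
  omega

namespace Multigraph

theorem splitState_iff_of_three (G : Multigraph) {s t w : G.V} (hst : s ≠ t) (hsw : s ≠ w)
    (htw : t ≠ w) (hV : ∀ v, v = s ∨ v = t ∨ v = w) (E' : Finset G.E) :
    G.SplitState s t E' ↔
      ¬ (G.subgraph E').Adj s t ∧ Xor ((G.subgraph E').Adj w s) ((G.subgraph E').Adj w t) :=
  SimpleGraph.splits_iff_of_three hst hsw htw hV

theorem sRel_eq_sum_of_splitState_iff (G : Multigraph) {s t : G.V} (p : ℝ)
    {T : Finset (Finset G.E)} (hT : ∀ E', G.SplitState s t E' ↔ E' ∈ T) :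
    G.sRel s t p = ∑ E' ∈ T, p ^ E'.card * (1 - p) ^ (Fintype.card G.E - E'.card) := by
  classical
  rw [sRel, ← Finset.sum_filter]
  congr 1
  ext E'
  simp [hT]

theorem splitState_doubleBundle_iff {a b : ℕ} (E' : Finset (Fin (a + b))) :
    (doubleBundle a b).SplitState (0 : Fin 3) (1 : Fin 3) E' ↔
      E' ∈ (Finset.univ.filter fun e : Fin (a + b) => a ≤ e.val).powerset.erase ∅ := by
  refine (splitState_iff_of_three (doubleBundle a b) (s := (0 : Fin 3)) (t := (1 : Fin 3))
    (w := (2 : Fin 3)) (by decide : (0 : Fin 3) ≠ 1) (by decide : (0 : Fin 3) ≠ 2)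
    (by decide : (1 : Fin 3) ≠ 2) (by decide : ∀ v : Fin 3, v = 0 ∨ v = 1 ∨ v = 2) E').trans ?_
  dsimp only [subgraph, doubleBundle]
  simp [ite_eq_iff, Finset.subset_iff, ← Finset.nonempty_iff_ne_empty]
  grind

theorem sRel_doubleBundle (a b : ℕ) (p : ℝ) :
    (doubleBundle a b).sRel (0 : Fin 3) (1 : Fin 3) p = (1 - p) ^ a - (1 - p) ^ (a + b) := by
  refine (sRel_eq_sum_of_splitState_iff _ p splitState_doubleBundle_iff).trans ?_
  -- restate the sum over `Finset (Fin (a + b))` instead of `Finset (doubleBundle a b).E`, so that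
  -- the `Finset` lemmas can rewrite it
  show ∑ E' ∈ (Finset.univ.filter fun e : Fin (a + b) => a ≤ e.val).powerset.erase ∅,
      p ^ E'.card * (1 - p) ^ (Fintype.card (Fin (a + b)) - E'.card) = _
  rw [Finset.sum_powerset_erase_empty_pow_mul_one_sub_pow _ _ (Finset.card_le_univ _),
    Fin.card_filter_le_val, Fintype.card_fin, Nat.add_sub_cancel]

theorem gnm_three_ends {m : ℕ} (e : (Gnm 3 m 1 (by decide)).E) :
    (Gnm 3 m 1 (by decide)).ends e =
      if Fin.val (n := m) e = 0 then s((0 : Fin 3), (1 : Fin 3))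
      else s((1 : Fin 3), (2 : Fin 3)) := by
  obtain ⟨k, hk⟩ := e
  simp only [Gnm]
  split_ifs with h₁ h₀ h₀
  · simp [h₀]
  · obtain rfl : k = 1 := by omega
    rfl
  · omega
  · rfl

theorem splitState_gnm_three_iff {m : ℕ} (hm : 0 < m) (E' : Finset (Fin m)) :
    (Gnm 3 m 1 (by decide)).SplitState (0 : Fin 3) (2 : Fin 3) E' ↔
      E' ∈ insert {⟨0, hm⟩} ((Finset.univ.erase ⟨0, hm⟩).powerset.erase ∅) := by
  refine (splitState_iff_of_three (Gnm 3 m 1 (by decide)) (s := (0 : Fin 3)) (t := (2 : Fin 3))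
    (w := (1 : Fin 3)) (by decide : (0 : Fin 3) ≠ 2) (by decide : (0 : Fin 3) ≠ 1)
    (by decide : (2 : Fin 3) ≠ 1) (by decide : ∀ v : Fin 3, v = 0 ∨ v = 2 ∨ v = 1) E').trans ?_
  have hval : ∀ e : Fin m, e.val = 0 ↔ e = ⟨0, hm⟩ := fun e => by simp [Fin.ext_iff]
  simp only [subgraph, gnm_three_ends]
  -- unfold the vertex type `(Gnm 3 m 1 _).V` to `Fin 3`, so that `simp` decides vertex equalities
  dsimp only [Gnm]
  simp [ite_eq_iff, hval, Finset.subset_iff, ← Finset.nonempty_iff_ne_empty]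
  exact Finset.xor_mem_exists_ne_iff _ E'

theorem sRel_gnm_three {m : ℕ} (hm : 0 < m) (p : ℝ) :
    (Gnm 3 m 1 (by decide)).sRel (0 : Fin 3) (2 : Fin 3) p =
      (1 - p) + (1 - p) ^ (m - 1) - 2 * (1 - p) ^ m := by
  refine (sRel_eq_sum_of_splitState_iff _ p (splitState_gnm_three_iff hm)).trans ?_
  show ∑ E' ∈ insert {(⟨0, hm⟩ : Fin m)}
      (((Finset.univ : Finset (Fin m)).erase ⟨0, hm⟩).powerset.erase ∅),
      p ^ E'.card * (1 - p) ^ (Fintype.card (Fin m) - E'.card) = _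
  rw [Finset.sum_insert (by simp), Finset.sum_powerset_erase_empty_pow_mul_one_sub_pow _ _
    (Finset.card_le_univ _), Finset.card_erase_of_mem (Finset.mem_univ _), Finset.card_univ,
    Fintype.card_fin, Finset.card_singleton]
  obtain ⟨n, rfl⟩ : ∃ n, m = n + 1 := ⟨m - 1, by omega⟩
  simp only [Nat.add_sub_cancel, Nat.add_sub_cancel_left]
  ring

end Multigraph

/-- For the graph `C` on vertices `s, t, v` with a bundle of `a` edges
between `s` and `t` and `m-a` edges between `t` and `v` (terminals `s, t`):
`sRel(C,s,t;p) = (1-p)^a - (1-p)^m` for `p ∈ [0,1]`, and for `p ∈ (0,1)` this is strictly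
less than `(1-p) + (1-p)^{m-1} - 2(1-p)^m = sRel(G_{3,m},s,t;p)`. -/
theorem sRel_C_lt (m : ℕ) (a : ℕ) (ha₁ : 1 ≤ a) (ha₂ : a ≤ m - 1) :
    (∀ p : ℝ, 0 ≤ p → p ≤ 1 →
      (Multigraph.doubleBundle a (m - a)).sRel (0 : Fin 3) (1 : Fin 3) p =
        (1 - p) ^ a - (1 - p) ^ m) ∧
    (∀ p : ℝ, 0 < p → p < 1 →
      (Multigraph.doubleBundle a (m - a)).sRel (0 : Fin 3) (1 : Fin 3) p <
        (1 - p) + (1 - p) ^ (m - 1) - 2 * (1 - p) ^ m ∧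
      (1 - p) + (1 - p) ^ (m - 1) - 2 * (1 - p) ^ m =
        (Multigraph.Gnm 3 m 1 (by omega)).sRel
          (⟨0, by omega⟩ : Fin 3) (⟨2, by omega⟩ : Fin 3) p) := by
  have hsRel (p : ℝ) : (Multigraph.doubleBundle a (m - a)).sRel (0 : Fin 3) (1 : Fin 3) p =
      (1 - p) ^ a - (1 - p) ^ m := by
    rw [Multigraph.sRel_doubleBundle, Nat.add_sub_cancel' (by omega)]
  refine ⟨fun p _ _ => hsRel p, fun p hp hp₁ =>
    ⟨?_, (Multigraph.sRel_gnm_three (by omega) p).symm⟩⟩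
  have hfirst : (1 - p) ^ a ≤ 1 - p :=
    pow_le_of_le_one (by linarith) (by linarith) (by omega)
  have hlast : (1 - p) ^ m < (1 - p) ^ (m - 1) :=
    pow_lt_pow_right_of_lt_one₀ (by linarith) (by linarith) (by omega)
  rw [hsRel]
  linarith
end
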